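/- arXiv:2510.16906 — 6 statements merged into one kernel-verified Lean document; each statement's English description precedes it below -/
import Mathlib

section
/- Let H be a complex Hilbert space, T > 0, and ζ : ℝ → H a continuous function satisfying ⟪ζ(t+T), ζ(s+T)⟫ = ⟪ζ(t), ζ(s)⟫ for all t, s ∈ ℝ. For integers k ≥ 1 and j ∈ ℤ define ζ_{kj} := T^{−1/2} ∫₀ᵀ exp(−2πi φ(k) v / T) · ζ(v + jT) dv (Bochner integral in H), where φ(k) = (−1)^k ⌊k/2⌋. Then the generated vector-valued sequence is stationary: for all k, n ≥ 1 and all l, j ∈ ℤ, ⟪ζ_{k, l+1}, ζ_{n, j+1}⟫ = ⟪ζ_{k, l}, ζ_{n, j}⟫. -/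
open MeasureTheory

/-- `φ(k) = (−1)^k ⌊k/2⌋`. -/
def phi (k : ℕ) : ℤ := (-1) ^ k * ((k / 2 : ℕ) : ℤ)

private lemma intervalIntegral_conj' {f : ℝ → ℂ} {a b : ℝ} :
    (∫ x in a..b, (starRingEnd ℂ) (f x)) = (starRingEnd ℂ) (∫ x in a..b, f x) := by
  simp [intervalIntegral, integral_conj, map_sub]

private lemma inner_intervalIntegral_intervalIntegral
    {H : Type*} [NormedAddCommGroup H] [InnerProductSpace ℂ H] [CompleteSpace H]
    {f g : ℝ → H} {T : ℝ} (hf : Continuous f) (hg : Continuous g) :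
    (inner ℂ (∫ v in (0:ℝ)..T, f v) (∫ w in (0:ℝ)..T, g w) : ℂ)
      = ∫ w in (0:ℝ)..T, ∫ v in (0:ℝ)..T, (inner ℂ (f v) (g w) : ℂ) := by
  have h0 : (inner ℂ (∫ v in (0:ℝ)..T, f v) (∫ w in (0:ℝ)..T, g w) : ℂ)
      = innerSL ℂ (∫ v in (0:ℝ)..T, f v) (∫ w in (0:ℝ)..T, g w) := rfl
  rw [h0, ← (innerSL ℂ (∫ v in (0:ℝ)..T, f v)).intervalIntegral_comp_comm
      (hg.intervalIntegrable _ _)]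
  refine intervalIntegral.integral_congr fun w _ => ?_
  have : (inner ℂ (∫ v in (0:ℝ)..T, f v) (g w) : ℂ)
      = (starRingEnd ℂ) (inner ℂ (g w) (∫ v in (0:ℝ)..T, f v)) := by
    rw [inner_conj_symm]
  have h1 : (inner ℂ (g w) (∫ v in (0:ℝ)..T, f v) : ℂ)
      = innerSL ℂ (g w) (∫ v in (0:ℝ)..T, f v) := rfl
  rw [innerSL_apply_apply, this, h1,
    ← (innerSL ℂ (g w)).intervalIntegral_comp_comm (hf.intervalIntegrable _ _),
    ← intervalIntegral_conj']
  refine intervalIntegral.integral_congr fun v _ => ?_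
  simp [inner_conj_symm]

/-- For a continuous periodically correlated function `ζ : ℝ → H`
into a complex Hilbert space, the generated vector-valued sequence
`ζ_{kj} = T^{-1/2} ∫₀ᵀ exp(−2πi φ(k) v / T) ζ(v + jT) dv` is stationary. -/
theorem generated_sequence_stationary
    {H : Type*} [NormedAddCommGroup H] [InnerProductSpace ℂ H] [CompleteSpace H]
    (T : ℝ) (hT : 0 < T) (ζ : ℝ → H) (hcont : Continuous ζ)
    (hPC : ∀ t s : ℝ, (inner ℂ (ζ (t + T)) (ζ (s + T)) : ℂ) = inner ℂ (ζ t) (ζ s))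
    (Z : ℕ → ℤ → H)
    (hZ : ∀ (k : ℕ) (j : ℤ), Z k j = ((Real.sqrt T : ℂ))⁻¹ •
      ∫ v in (0:ℝ)..T,
        Complex.exp (-(2 * (Real.pi : ℂ) * Complex.I * (phi k : ℂ) * (v : ℂ) / (T : ℂ)))
          • ζ (v + (j : ℝ) * T)) :
    ∀ k n : ℕ, 1 ≤ k → 1 ≤ n → ∀ l j : ℤ,
      (inner ℂ (Z k (l + 1)) (Z n (j + 1)) : ℂ) = inner ℂ (Z k l) (Z n j) := by
  intro k n _ _ l j
  have hf : ∀ (m : ℕ) (i : ℤ), Continuous fun v : ℝ =>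
      Complex.exp (-(2 * (Real.pi : ℂ) * Complex.I * (phi m : ℂ) * (v : ℂ) / (T : ℂ)))
        • ζ (v + (i : ℝ) * T) := by
    intro m i
    exact (Complex.continuous_exp.comp (by fun_prop)).smul (by fun_prop)
  rw [hZ, hZ, hZ, hZ, inner_smul_left, inner_smul_right, inner_smul_left, inner_smul_right]
  congr 1
  congr 1
  rw [inner_intervalIntegral_intervalIntegral (hf k (l+1)) (hf n (j+1)),
    inner_intervalIntegral_intervalIntegral (hf k l) (hf n j)]
  refine intervalIntegral.integral_congr fun w _ => ?_
  refine intervalIntegral.integral_congr fun v _ => ?_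
  simp only [inner_smul_left, inner_smul_right]
  congr 1
  congr 1
  have e1 : v + ((l + 1 : ℤ) : ℝ) * T = (v + (l : ℝ) * T) + T := by push_cast; ring
  have e2 : w + ((j + 1 : ℤ) : ℝ) * T = (w + (j : ℝ) * T) + T := by push_cast; ring
  rw [e1, e2, hPC]
end

section
/- (Wold decomposition, Theorem 3.2.2.) Let H be a complex Hilbert space and x : ℤ → ℕ → H a double-indexed family that is stationary in the sense that ⟪x(l+1)(k), x(j+1)(n)⟫ = ⟪x(l)(k), x(j)(n)⟫ for all l, j ∈ ℤ and k, n ∈ ℕ. For n ∈ ℤ let H_x(n) denote the topological closure of the ℂ-linear span of {x(j)(k) : j ≤ n, k ∈ ℕ}, and call a stationary family y regular if ⋂_{n ∈ ℤ} H_y(n) = {0} and singular if y(j)(k) ∈ ⋂_{n ∈ ℤ} H_y(n) for all j, k. Then there exists a unique pair of families r, s : ℤ → ℕ → H such that: (i) x(j)(k) = r(j)(k) + s(j)(k) for all j, k; (ii) r and s are each stationary in the above sense; (iii) ⟪r(j)(k), s(l)(n)⟫ = 0 for all j, l ∈ ℤ and k, n ∈ ℕ; (iv) r is regular and s is singular;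 (v) r(j)(k) ∈ H_x(j) and s(j)(k) ∈ H_x(j) for all j, k. Moreover s(j)(k) equals the orthogonal projection of x(j)(k) onto the closed subspace ⋂_{n ∈ ℤ} H_x(n). -/
open MeasureTheory

variable {H : Type*} [NormedAddCommGroup H] [InnerProductSpace ℂ H]

/-- The double-indexed family is stationary: shifting the time index by one
preserves all inner ℂ products. -/
def Stationary (x : ℤ → ℕ → H) : Prop :=
  ∀ (l j : ℤ) (k n : ℕ), (inner ℂ (x (l + 1) k) (x (j + 1) n) : ℂ) = inner ℂ (x l k) (x j n)

/-- `Hsub y n` is the closure of the linear span of `{y j k : j ≤ n, k ∈ ℕ}`. -/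
def Hsub (y : ℤ → ℕ → H) (n : ℤ) : Submodule ℂ H :=
  (Submodule.span ℂ {v : H | ∃ (j : ℤ) (k : ℕ), j ≤ n ∧ y j k = v}).topologicalClosure

/-- `p = (r, s)` is a Wold decomposition of `x`: `x = r + s`, both parts stationary,
mutually orthogonal, `r` regular, `s` singular, and both subordinated to `x`. -/
def IsWoldPair (x : ℤ → ℕ → H) (p : (ℤ → ℕ → H) × (ℤ → ℕ → H)) : Prop :=
  (∀ (j : ℤ) (k : ℕ), x j k = p.1 j k + p.2 j k) ∧
  Stationary p.1 ∧ Stationary p.2 ∧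
  (∀ (j l : ℤ) (k n : ℕ), (inner ℂ (p.1 j k) (p.2 l n) : ℂ) = 0) ∧
  (⨅ n : ℤ, Hsub p.1 n) = ⊥ ∧
  (∀ (j : ℤ) (k : ℕ), p.2 j k ∈ ⨅ n : ℤ, Hsub p.2 n) ∧
  (∀ (j : ℤ) (k : ℕ), p.1 j k ∈ Hsub x j ∧ p.2 j k ∈ Hsub x j)

noncomputable section ShiftOp

open Finsupp

/-- index family as a function on pairs -/
def xf (x : ℤ → ℕ → H) : ℤ × ℕ → H := fun p => x p.1 p.2

/-- span of all values -/
def Dspan (x : ℤ → ℕ → H) : Submodule ℂ H := Submodule.span ℂ (Set.range (xf x))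

def Mcl (x : ℤ → ℕ → H) : Submodule ℂ H := (Dspan x).topologicalClosure

lemma inner_lc (y z : ℤ × ℕ → H) (f g : ℤ × ℕ →₀ ℂ) :
    (inner ℂ (Finsupp.linearCombination ℂ y f) (Finsupp.linearCombination ℂ z g) : ℂ)
      = ∑ p ∈ f.support, ∑ q ∈ g.support,
          (starRingEnd ℂ) (f p) * (g q * (inner ℂ (y p) (z q) : ℂ)) := by
  rw [Finsupp.linearCombination_apply, Finsupp.linearCombination_apply, Finsupp.sum, Finsupp.sum,
    sum_inner]
  simp only [inner_sum, inner_smul_left, inner_smul_right]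
  exact Finset.sum_congr rfl fun p _ => Finset.sum_congr rfl fun q _ => by ring

end ShiftOp

noncomputable section Shift2

/-- compatibility of the family with an index shift -/
def ShiftCompat (x : ℤ → ℕ → H) (τ : ℤ → ℤ) : Prop :=
  ∀ (l j : ℤ) (k n : ℕ), (inner ℂ (x (τ l) k) (x (τ j) n) : ℂ) = inner ℂ (x l k) (x j n)

/-- the linear combination map -/
def lcx (x : ℤ → ℕ → H) : (ℤ × ℕ →₀ ℂ) →ₗ[ℂ] H := Finsupp.linearCombination ℂ (xf x)

/-- shifted linear combination map -/
def lcxτ (x : ℤ → ℕ → H) (τ : ℤ → ℤ) : (ℤ × ℕ →₀ ℂ) →ₗ[ℂ] H :=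
  (lcx x).comp (Finsupp.lmapDomain ℂ ℂ (fun p : ℤ × ℕ => (τ p.1, p.2)))

lemma lcxτ_apply (x : ℤ → ℕ → H) (τ : ℤ → ℤ) (f : ℤ × ℕ →₀ ℂ) :
    lcxτ x τ f = Finsupp.linearCombination ℂ (fun p : ℤ × ℕ => x (τ p.1) p.2) f := by
  show Finsupp.linearCombination ℂ (xf x) (Finsupp.mapDomain _ f) = _
  rw [Finsupp.linearCombination_mapDomain]
  rfl

lemma key_inner {x : ℤ → ℕ → H} {τ : ℤ → ℤ} (h : ShiftCompat x τ) (f g : ℤ × ℕ →₀ ℂ) :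
    (inner ℂ (lcxτ x τ f) (lcxτ x τ g) : ℂ) = inner ℂ (lcx x f) (lcx x g) := by
  rw [lcxτ_apply, lcxτ_apply]
  show (inner ℂ (Finsupp.linearCombination ℂ _ f) (Finsupp.linearCombination ℂ _ g) : ℂ)
      = inner ℂ (Finsupp.linearCombination ℂ (xf x) f) (Finsupp.linearCombination ℂ (xf x) g)
  rw [inner_lc, inner_lc]
  exact Finset.sum_congr rfl fun p _ => Finset.sum_congr rfl fun q _ => by
    rw [show (inner ℂ (x (τ p.1) p.2) (x (τ q.1) q.2) : ℂ) = inner ℂ (xf x p) (xf x q) from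
      h p.1 q.1 p.2 q.2]

lemma lcxτ_eq_zero {x : ℤ → ℕ → H} {τ : ℤ → ℤ} (h : ShiftCompat x τ) {f : ℤ × ℕ →₀ ℂ}
    (hf : lcx x f = 0) : lcxτ x τ f = 0 := by
  have := key_inner h f f
  rw [hf, inner_zero_left] at this
  exact inner_self_eq_zero.mp this

lemma lcxτ_welldef {x : ℤ → ℕ → H} {τ : ℤ → ℤ} (h : ShiftCompat x τ) {f g : ℤ × ℕ →₀ ℂ}
    (hfg : lcx x f = lcx x g) : lcxτ x τ f = lcxτ x τ g := by
  have h0 : lcx x (f - g) = 0 := by rw [map_sub, hfg, sub_self]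
  have := lcxτ_eq_zero h h0
  rw [map_sub, sub_eq_zero] at this
  exact this

lemma mem_Dspan_iff {x : ℤ → ℕ → H} {v : H} : v ∈ Dspan x ↔ ∃ f, lcx x f = v := by
  rw [Dspan, ← Finsupp.range_linearCombination]
  exact Iff.rfl

/-- a chosen `Finsupp` representative of an element of the span -/
def rep (x : ℤ → ℕ → H) (v : ↥(Dspan x)) : ℤ × ℕ →₀ ℂ :=
  Classical.choose (mem_Dspan_iff.mp v.2)

lemma rep_spec (x : ℤ → ℕ → H) (v : ↥(Dspan x)) : lcx x (rep x v) = (v : H) :=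
  Classical.choose_spec (mem_Dspan_iff.mp v.2)

end Shift2

noncomputable section Shift3

variable {x : ℤ → ℕ → H} {τ : ℤ → ℤ}

/-- the shift operator on the span, as a linear map -/
def U0 (h : ShiftCompat x τ) : ↥(Dspan x) →ₗ[ℂ] H where
  toFun v := lcxτ x τ (rep x v)
  map_add' v w := by
    have h1 : lcx x (rep x (v + w)) = lcx x (rep x v + rep x w) := by
      rw [map_add, rep_spec, rep_spec, rep_spec]; rfl
    show lcxτ x τ (rep x (v + w)) = lcxτ x τ (rep x v) + lcxτ x τ (rep x w)
    rw [lcxτ_welldef h h1, map_add]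
  map_smul' c v := by
    have h1 : lcx x (rep x (c • v)) = lcx x (c • rep x v) := by
      rw [_root_.map_smul, rep_spec, rep_spec]; rfl
    show lcxτ x τ (rep x (c • v)) = c • lcxτ x τ (rep x v)
    rw [lcxτ_welldef h h1, _root_.map_smul]

lemma U0_apply (h : ShiftCompat x τ) (f : ℤ × ℕ →₀ ℂ) (hf : lcx x f ∈ Dspan x) :
    U0 h ⟨lcx x f, hf⟩ = lcxτ x τ f := by
  show lcxτ x τ (rep x ⟨lcx x f, hf⟩) = lcxτ x τ f
  exact lcxτ_welldef h (rep_spec x _)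

lemma U0_inner (h : ShiftCompat x τ) (v w : ↥(Dspan x)) :
    (inner ℂ (U0 h v) (U0 h w) : ℂ) = inner ℂ (v : H) (w : H) := by
  show (inner ℂ (lcxτ x τ (rep x v)) (lcxτ x τ (rep x w)) : ℂ) = _
  rw [key_inner h, rep_spec, rep_spec]

lemma U0_norm (h : ShiftCompat x τ) (v : ↥(Dspan x)) : ‖U0 h v‖ = ‖(v : H)‖ := by
  have h2 : (‖U0 h v‖ : ℝ) ^ 2 = (‖(v : H)‖ : ℝ) ^ 2 := by
    rw [← @inner_self_eq_norm_sq ℂ, ← @inner_self_eq_norm_sq ℂ, U0_inner h v v]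
  nlinarith [norm_nonneg (U0 h v), norm_nonneg (v : H)]

/-- the shift operator on the span, as a continuous linear map -/
def U0L (h : ShiftCompat x τ) : ↥(Dspan x) →L[ℂ] H :=
  LinearMap.mkContinuous (U0 h) 1 (fun v => by rw [U0_norm h, one_mul]; rfl)

/-- inclusion of the span into its closure -/
def inclDM (x : ℤ → ℕ → H) : ↥(Dspan x) →L[ℂ] ↥(Mcl x) :=
  ContinuousLinearMap.codRestrict (Dspan x).subtypeL (Mcl x)
    (fun v => Submodule.le_topologicalClosure _ v.2)

lemma inclDM_isometry (x : ℤ → ℕ → H) : Isometry (inclDM x) :=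
  Isometry.of_dist_eq fun v w => rfl

lemma inclDM_denseRange (x : ℤ → ℕ → H) : DenseRange (inclDM x) := by
  intro w
  have hw : (w : H) ∈ closure ((Dspan x : Set H)) := w.2
  rw [Metric.mem_closure_iff] at hw
  rw [Metric.mem_closure_range_iff]
  intro ε hε
  obtain ⟨b, hb, hd⟩ := hw ε hε
  exact ⟨⟨b, hb⟩, hd⟩

end Shift3

noncomputable section Shift4

instance Mcl_completeSpace (x : ℤ → ℕ → H) [CompleteSpace H] : CompleteSpace ↥(Mcl x) :=
  (Submodule.isClosed_topologicalClosure _).completeSpace_coe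

variable [CompleteSpace H] {x : ℤ → ℕ → H} {τ : ℤ → ℤ}

/-- the shift operator, globally defined (as zero on the orthocomplement of `Mcl x`) -/
def Wop (h : ShiftCompat x τ) : H →L[ℂ] H :=
  ((U0L h).extend (inclDM x) ).comp
    (Submodule.orthogonalProjectionOnto (Mcl x))

lemma Wop_gen (h : ShiftCompat x τ) (j : ℤ) (k : ℕ) : Wop h (x j k) = x (τ j) k := by
  have hx1 : lcx x (Finsupp.single ((j, k) : ℤ × ℕ) (1 : ℂ)) = x j k := by
    show Finsupp.linearCombination ℂ (xf x) _ = _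
    rw [Finsupp.linearCombination_single, one_smul]
    rfl
  have hmemD : x j k ∈ Dspan x := Submodule.subset_span ⟨(j, k), rfl⟩
  have hmemM : x j k ∈ Mcl x := Submodule.le_topologicalClosure _ hmemD
  have hproj : Submodule.orthogonalProjectionOnto (Mcl x) (x j k) = inclDM x ⟨x j k, hmemD⟩ :=
    Subtype.ext (Submodule.starProjection_eq_self_iff.mpr hmemM)
  show ((U0L h).extend (inclDM x)
      ) (Submodule.orthogonalProjectionOnto (Mcl x) (x j k)) = _
  rw [hproj, ContinuousLinearMap.extend_eq _ (inclDM_denseRange x) (inclDM_isometry x).isUniformInducing]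
  show U0 h ⟨x j k, hmemD⟩ = x (τ j) k
  have hsub : (⟨x j k, hmemD⟩ : ↥(Dspan x))
      = ⟨lcx x (Finsupp.single ((j, k) : ℤ × ℕ) (1 : ℂ)), hx1 ▸ hmemD⟩ := Subtype.ext hx1.symm
  rw [hsub, U0_apply, lcxτ_apply, Finsupp.linearCombination_single, one_smul]

end Shift4

section HsubLemmas

lemma Hsub_isClosed (y : ℤ → ℕ → H) (n : ℤ) : IsClosed ((Hsub y n : Set H)) :=
  Submodule.isClosed_topologicalClosure _

lemma mem_Hsub (y : ℤ → ℕ → H) {j n : ℤ} (h : j ≤ n) (k : ℕ) : y j k ∈ Hsub y n :=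
  Submodule.le_topologicalClosure _ (Submodule.subset_span ⟨j, k, h, rfl⟩)

lemma Hsub_le {y : ℤ → ℕ → H} {n : ℤ} {N : Submodule ℂ H} (hN : IsClosed (N : Set H))
    (hgen : ∀ (j : ℤ) (k : ℕ), j ≤ n → y j k ∈ N) : Hsub y n ≤ N :=
  Submodule.topologicalClosure_minimal _
    (Submodule.span_le.mpr (by rintro v ⟨j, k, hj, rfl⟩; exact hgen j k hj)) hN

lemma Hsub_mono (y : ℤ → ℕ → H) {m n : ℤ} (h : m ≤ n) : Hsub y m ≤ Hsub y n :=
  Hsub_le (Hsub_isClosed _ _) (fun j k hj => mem_Hsub y (le_trans hj h) k)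

lemma Hsub_le_Mcl (x : ℤ → ℕ → H) (n : ℤ) : Hsub x n ≤ Mcl x :=
  Hsub_le (Submodule.isClosed_topologicalClosure _)
    (fun j k _ => Submodule.le_topologicalClosure _ (Submodule.subset_span ⟨(j, k), rfl⟩))

lemma isClosed_iInf {p : ℤ → Submodule ℂ H} (h : ∀ n, IsClosed ((p n : Set H))) :
    IsClosed (((⨅ n, p n : Submodule ℂ H) : Set H)) := by
  rw [Submodule.coe_iInf]; exact isClosed_iInter h

lemma Hsub_le_comap {y : ℤ → ℕ → H} {n : ℤ} (T : H →L[ℂ] H) {N : Submodule ℂ H}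
    (hN : IsClosed (N : Set H)) (hgen : ∀ (j : ℤ) (k : ℕ), j ≤ n → T (y j k) ∈ N) :
    Hsub y n ≤ N.comap (T : H →ₗ[ℂ] H) :=
  Hsub_le (hN.preimage T.continuous) hgen

end HsubLemmas

section Transport

variable {x : ℤ → ℕ → H} {τ : ℤ → ℤ}

lemma mem_Mcl_closure {v : H} (hv : v ∈ Mcl x) : v ∈ closure ((Dspan x : Set H)) := hv

lemma T_inner_pres (T : H →L[ℂ] H) (hgen : ∀ (j : ℤ) (k : ℕ), T (x j k) = x (τ j) k)
    (hc : ShiftCompat x τ) :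
    ∀ v ∈ Mcl x, ∀ w ∈ Mcl x, (inner ℂ (T v) (T w) : ℂ) = inner ℂ v w := by
  have stepA : ∀ (j : ℤ) (k : ℕ), ∀ w ∈ Mcl x,
      (inner ℂ (T (x j k)) (T w) : ℂ) = inner ℂ (x j k) w := by
    intro j k w hw
    have hclosed : IsClosed {w : H | (inner ℂ (T (x j k)) (T w) : ℂ) = inner ℂ (x j k) w} :=
      isClosed_eq (Continuous.inner continuous_const T.continuous)
        (Continuous.inner continuous_const continuous_id)
    refine closure_minimal ?_ hclosed (mem_Mcl_closure hw)
    intro u hu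
    induction hu using Submodule.span_induction with
    | mem v hv =>
        obtain ⟨⟨l, m⟩, rfl⟩ := hv
        show (inner ℂ (T (x j k)) (T (x l m)) : ℂ) = inner ℂ (x j k) (x l m)
        rw [hgen, hgen]
        exact hc j l k m
    | zero => simp
    | add a b _ _ ha hb =>
        show (inner ℂ (T (x j k)) (T (a + b)) : ℂ) = inner ℂ (x j k) (a + b)
        rw [map_add, inner_add_right, inner_add_right, ha, hb]
    | smul c a _ ha =>
        show (inner ℂ (T (x j k)) (T (c • a)) : ℂ) = inner ℂ (x j k) (c • a)
        rw [_root_.map_smul, inner_smul_right, inner_smul_right, ha]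
  intro v hv w hw
  have hclosed : IsClosed {v : H | (inner ℂ (T v) (T w) : ℂ) = inner ℂ v w} :=
    isClosed_eq ((T.continuous.inner (continuous_const : Continuous fun _ : H => T w)))
      (continuous_id.inner continuous_const)
  refine closure_minimal ?_ hclosed (mem_Mcl_closure hv)
  intro u hu
  induction hu using Submodule.span_induction with
  | mem v hv =>
      obtain ⟨⟨l, m⟩, rfl⟩ := hv
      exact stepA l m w hw
  | zero => simp
  | add a b _ _ ha hb =>
      show (inner ℂ (T (a + b)) (T w) : ℂ) = inner ℂ (a + b) w
      rw [map_add, inner_add_left, inner_add_left, ha, hb]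
  | smul c a _ ha =>
      show (inner ℂ (T (c • a)) (T w) : ℂ) = inner ℂ (c • a) w
      rw [_root_.map_smul, inner_smul_left, inner_smul_left, ha]

lemma T_inverse (T T' : H →L[ℂ] H) {τ' : ℤ → ℤ}
    (hgen : ∀ (j : ℤ) (k : ℕ), T (x j k) = x (τ j) k)
    (hgen' : ∀ (j : ℤ) (k : ℕ), T' (x j k) = x (τ' j) k)
    (hττ' : ∀ j, τ' (τ j) = j) :
    ∀ v ∈ Mcl x, T' (T v) = v := by
  intro v hv
  have hclosed : IsClosed {v : H | T' (T v) = v} :=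
    isClosed_eq (T'.continuous.comp T.continuous) continuous_id
  refine closure_minimal ?_ hclosed (mem_Mcl_closure hv)
  intro u hu
  induction hu using Submodule.span_induction with
  | mem v hv =>
      obtain ⟨⟨l, m⟩, rfl⟩ := hv
      show T' (T (x l m)) = x l m
      rw [hgen, hgen', hττ']
  | zero => simp
  | add a b _ _ ha hb =>
      show T' (T (a + b)) = a + b
      rw [map_add, map_add, ha, hb]
  | smul c a _ ha =>
      show T' (T (c • a)) = c • a
      rw [_root_.map_smul, _root_.map_smul, ha]

end Transport

section Absorb

lemma absorb [CompleteSpace H] {x r s : ℤ → ℕ → H}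
    (hsum : ∀ (j : ℤ) (k : ℕ), x j k = r j k + s j k)
    {K : Submodule ℂ H} (hK : IsClosed (K : Set H)) (n₀ : ℤ)
    (hsK : ∀ (j : ℤ) (k : ℕ), j ≤ n₀ → s j k ∈ K)
    (hrK : ∀ (j : ℤ) (k : ℕ), r j k ∈ Kᗮ)
    (hreg : (⨅ n : ℤ, Hsub r n) = ⊥)
    {v : H} (hv : ∀ m : ℤ, v ∈ Hsub x m) : v ∈ K := by
  haveI : CompleteSpace ↥K := hK.completeSpace_coe
  set Q : H →L[ℂ] H := ContinuousLinearMap.id ℂ H - K.subtypeL.comp (Submodule.orthogonalProjectionOnto K)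
    with hQ
  have hQapply : ∀ u, Q u = u - (Submodule.orthogonalProjectionOnto K u : H) := fun u => rfl
  have hQx : ∀ (j : ℤ) (k : ℕ), j ≤ n₀ → Q (x j k) = r j k := by
    intro j k hj
    rw [hQapply, hsum j k]
    have h2 : Submodule.orthogonalProjectionOnto K (r j k) = 0 :=
      Submodule.orthogonalProjectionOnto_apply_of_mem_orthogonal (hrK j k)
    have h3 : (Submodule.orthogonalProjectionOnto K (s j k) : H) = s j k :=
      Submodule.starProjection_eq_self_iff.mpr (hsK j k hj)
    rw [map_add, Submodule.coe_add, h2, h3, Submodule.coe_zero, zero_add,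
      add_sub_cancel_right]
  have hQv : ∀ m : ℤ, Q v ∈ Hsub r m := by
    intro m
    have hle : Hsub x (min n₀ m) ≤ (Hsub r m).comap (Q : H →ₗ[ℂ] H) :=
      Hsub_le_comap Q (Hsub_isClosed r m) (fun j k hj => by
        rw [hQx j k (le_trans hj (min_le_left _ _))]
        exact mem_Hsub r (le_trans hj (min_le_right _ _)) k)
    exact hle (hv (min n₀ m))
  have hQ0 : Q v ∈ (⨅ n : ℤ, Hsub r n) := Submodule.mem_iInf _ |>.mpr hQv
  rw [hreg, Submodule.mem_bot, hQapply, sub_eq_zero] at hQ0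
  rw [hQ0]
  exact (Submodule.orthogonalProjectionOnto K v).2

end Absorb

section OrthLemma

lemma mem_orthogonal_Hsub {r s : ℤ → ℕ → H}
    (horth : ∀ (j l : ℤ) (k n : ℕ), (inner ℂ (r j k) (s l n) : ℂ) = 0)
    (j : ℤ) (k : ℕ) (m : ℤ) : r j k ∈ (Hsub s m)ᗮ := by
  rw [Submodule.mem_orthogonal]
  intro u hu
  have hclosed : IsClosed {u : H | (inner ℂ u (r j k) : ℂ) = 0} :=
    isClosed_eq (continuous_id.inner continuous_const) continuous_const
  refine closure_minimal ?_ hclosed hu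
  intro u hu
  induction hu using Submodule.span_induction with
  | mem v hv =>
      obtain ⟨l, n, _, rfl⟩ := hv
      show (inner ℂ (s l n) (r j k) : ℂ) = 0
      rw [inner_eq_zero_symm]
      exact horth j l k n
  | zero => simp
  | add a b _ _ ha hb =>
      show (inner ℂ (a + b) (r j k) : ℂ) = 0
      rw [inner_add_left, ha, hb, add_zero]
  | smul c a _ ha =>
      show (inner ℂ (c • a) (r j k) : ℂ) = 0
      rw [inner_smul_left, ha, mul_zero]

end OrthLemma


/-- **Wold decomposition, Theorem 3.2.2.** Every stationary double-indexed
family `x` in a complex Hilbert space admits a unique decomposition `x = r + s` into a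
regular and a singular stationary part, mutually orthogonal and subordinated to `x`;
moreover the singular part is the orthogonal projection of `x` onto `⋂ₙ H_x(n)`. -/
theorem wold_decomposition [CompleteSpace H] (x : ℤ → ℕ → H) (hx : Stationary x) :
    (∃! p : (ℤ → ℕ → H) × (ℤ → ℕ → H), IsWoldPair x p) ∧
      ∀ p : (ℤ → ℕ → H) × (ℤ → ℕ → H), IsWoldPair x p →
        ∀ (j : ℤ) (k : ℕ), p.2 j k ∈ (⨅ n : ℤ, Hsub x n) ∧
          x j k - p.2 j k ∈ (⨅ n : ℤ, Hsub x n)ᗮ := by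
  classical
  -- the shift operators
  have hτ : ShiftCompat x (fun j => j + 1) := hx
  have hτ' : ShiftCompat x (fun j => j - 1) := by
    intro l j k n
    have h := hx (l - 1) (j - 1) k n
    rw [sub_add_cancel, sub_add_cancel] at h
    exact h.symm
  set T : H →L[ℂ] H := Wop hτ with hT
  set T' : H →L[ℂ] H := Wop hτ' with hT'
  have hTgen : ∀ (j : ℤ) (k : ℕ), T (x j k) = x (j + 1) k := fun j k => Wop_gen hτ j k
  have hT'gen : ∀ (j : ℤ) (k : ℕ), T' (x j k) = x (j - 1) k := fun j k => Wop_gen hτ' j k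
  have hT'T : ∀ v ∈ Mcl x, T' (T v) = v :=
    T_inverse T T' hTgen hT'gen (fun j => by omega)
  have hTT' : ∀ v ∈ Mcl x, T (T' v) = v :=
    T_inverse T' T hT'gen hTgen (fun j => by omega)
  have hTin : ∀ v ∈ Mcl x, ∀ w ∈ Mcl x, (inner ℂ (T v) (T w) : ℂ) = inner ℂ v w :=
    T_inner_pres T hTgen hτ
  -- the singular subspace
  set S : Submodule ℂ H := ⨅ n : ℤ, Hsub x n with hS
  have hSclosed : IsClosed (S : Set H) := isClosed_iInf (fun n => Hsub_isClosed x n)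
  haveI : CompleteSpace ↥S := hSclosed.completeSpace_coe
  have hSM : S ≤ Mcl x := le_trans (iInf_le _ 0) (Hsub_le_Mcl x 0)
  have hTmapS : ∀ v ∈ S, T v ∈ S := by
    intro v hv
    rw [Submodule.mem_iInf]
    intro n
    have hle : Hsub x (n - 1) ≤ (Hsub x n).comap (T : H →ₗ[ℂ] H) :=
      Hsub_le_comap T (Hsub_isClosed x n) (fun j k hj => by
        rw [hTgen]; exact mem_Hsub x (by omega) k)
    exact hle ((Submodule.mem_iInf _).mp hv (n - 1))
  have hT'mapS : ∀ v ∈ S, T' v ∈ S := by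
    intro v hv
    rw [Submodule.mem_iInf]
    intro n
    have hle : Hsub x (n + 1) ≤ (Hsub x n).comap (T' : H →ₗ[ℂ] H) :=
      Hsub_le_comap T' (Hsub_isClosed x n) (fun j k hj => by
        rw [hT'gen]; exact mem_Hsub x (by omega) k)
    exact hle ((Submodule.mem_iInf _).mp hv (n + 1))
  -- the decomposition
  set s : ℤ → ℕ → H := fun j k => ((Submodule.orthogonalProjectionOnto S (x j k)) : H) with hs
  set r : ℤ → ℕ → H := fun j k => x j k - s j k with hr
  have hsS : ∀ (j : ℤ) (k : ℕ), s j k ∈ S := fun j k => (Submodule.orthogonalProjectionOnto S (x j k)).2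
  have hrperp : ∀ (j : ℤ) (k : ℕ), r j k ∈ Sᗮ := fun j k =>
    Submodule.sub_starProjection_mem_orthogonal (x j k)
  have hsum : ∀ (j : ℤ) (k : ℕ), x j k = r j k + s j k := fun j k => by
    show x j k = (x j k - s j k) + s j k; abel
  have hxM : ∀ (j : ℤ) (k : ℕ), x j k ∈ Mcl x :=
    fun j k => Hsub_le_Mcl x j (mem_Hsub x le_rfl k)
  have hsM : ∀ (j : ℤ) (k : ℕ), s j k ∈ Mcl x := fun j k => hSM (hsS j k)
  have hrM : ∀ (j : ℤ) (k : ℕ), r j k ∈ Mcl x := fun j k =>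
    Submodule.sub_mem _ (hxM j k) (hsM j k)
  have hrs0 : ∀ (j l : ℤ) (k n : ℕ), (inner ℂ (r j k) (s l n) : ℂ) = 0 := fun j l k n =>
    (Submodule.mem_orthogonal' S (r j k)).mp (hrperp j k) _ (hsS l n)
  have hsr0 : ∀ (j l : ℤ) (k n : ℕ), (inner ℂ (s j k) (r l n) : ℂ) = 0 := fun j l k n =>
    (Submodule.mem_orthogonal S (r l n)).mp (hrperp l n) _ (hsS j k)
  -- the projection commutes with the shift
  have hTs : ∀ (j : ℤ) (k : ℕ), s (j + 1) k = T (s j k) := by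
    intro j k
    refine (Submodule.eq_starProjection_of_mem_of_inner_eq_zero (K := S) (u := x (j + 1) k) (hTmapS _ (hsS j k)) ?_)
    intro w hw
    have hw' : w ∈ Mcl x := hSM hw
    have h1 : x (j + 1) k - T (s j k) = T (x j k - s j k) := by
      rw [map_sub, hTgen]
    have h2 : w = T (T' w) := (hTT' w hw').symm
    rw [h1, h2, hTin _ (Submodule.sub_mem _ (hxM j k) (hsM j k)) _ (hSM (hT'mapS w hw))]
    exact (Submodule.mem_orthogonal' S _).mp (hrperp j k) _ (hT'mapS w hw)
  -- stationarity of the two parts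
  have hstat_s : Stationary s := by
    intro l j k n
    rw [hTs l k, hTs j n]
    exact hTin _ (hsM l k) _ (hsM j n)
  have hrr : ∀ (l j : ℤ) (k n : ℕ),
      (inner ℂ (r l k) (r j n) : ℂ) = inner ℂ (x l k) (x j n) - inner ℂ (s l k) (s j n) := by
    intro l j k n
    have hxs : (inner ℂ (x l k) (s j n) : ℂ) = inner ℂ (s l k) (s j n) := by
      rw [hsum l k, inner_add_left, hrs0 l j k n, zero_add]
    have hsx : (inner ℂ (s l k) (x j n) : ℂ) = inner ℂ (s l k) (s j n) := by
      rw [hsum j n, inner_add_right, hsr0 l j k n, zero_add]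
    show (inner ℂ (x l k - s l k) (x j n - s j n) : ℂ) = _
    rw [inner_sub_left, inner_sub_right, inner_sub_right, hxs, hsx]
    ring
  have hstat_r : Stationary r := by
    intro l j k n
    rw [hrr, hrr, hx l j k n, hstat_s l j k n]
  -- regularity of r
  have hreg : (⨅ n : ℤ, Hsub r n) = ⊥ := by
    have h1 : ∀ n : ℤ, Hsub r n ≤ Hsub x n := fun n =>
      Hsub_le (Hsub_isClosed x n) (fun j k hj =>
        Submodule.sub_mem _ (mem_Hsub x hj k) ((iInf_le (fun n : ℤ => Hsub x n) n) (hsS j k)))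
    have h2 : Hsub r 0 ≤ Sᗮ := Hsub_le S.isClosed_orthogonal (fun j k _ => hrperp j k)
    rw [eq_bot_iff]
    intro v hv
    have hvS : v ∈ S := by
      rw [Submodule.mem_iInf]
      exact fun n => h1 n ((Submodule.mem_iInf _).mp hv n)
    have hvO : v ∈ Sᗮ := h2 ((Submodule.mem_iInf _).mp hv 0)
    have : (inner ℂ v v : ℂ) = 0 := (Submodule.mem_orthogonal S v).mp hvO v hvS
    rw [Submodule.mem_bot]
    exact inner_self_eq_zero.mp this
  -- singularity of s : S ≤ Hsub s n for every n
  have hSsub : ∀ n : ℤ, ∀ v ∈ S, v ∈ Hsub s n := by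
    intro n v hv
    have hsSn : Hsub s n ≤ S := Hsub_le hSclosed (fun j k _ => hsS j k)
    exact absorb hsum (Hsub_isClosed s n) n (fun j k hj => mem_Hsub s hj k)
      (fun j k => Submodule.orthogonal_le hsSn (hrperp j k)) hreg
      (fun m => (Submodule.mem_iInf _).mp hv m)
  have hsing : ∀ (j : ℤ) (k : ℕ), s j k ∈ ⨅ n : ℤ, Hsub s n := fun j k =>
    (Submodule.mem_iInf _).mpr (fun n => hSsub n _ (hsS j k))
  have hmem : ∀ (j : ℤ) (k : ℕ), r j k ∈ Hsub x j ∧ s j k ∈ Hsub x j := by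
    intro j k
    have h2 : s j k ∈ Hsub x j := (iInf_le (fun n : ℤ => Hsub x n) j) (hsS j k)
    exact ⟨Submodule.sub_mem _ (mem_Hsub x le_rfl k) h2, h2⟩
  have hpair : IsWoldPair x (r, s) :=
    ⟨hsum, hstat_r, hstat_s, hrs0, hreg, hsing, hmem⟩
  -- analysis of an arbitrary Wold pair
  have hkey : ∀ p : (ℤ → ℕ → H) × (ℤ → ℕ → H), IsWoldPair x p →
      ∀ (j : ℤ) (k : ℕ), p.2 j k ∈ S ∧ x j k - p.2 j k ∈ Sᗮ := by
    rintro p ⟨hsum', _, _, horth', hreg', hsing', hmem'⟩ j k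
    set K : Submodule ℂ H := ⨅ m : ℤ, Hsub p.2 m with hK
    have hKclosed : IsClosed (K : Set H) := isClosed_iInf (fun m => Hsub_isClosed _ m)
    have hKS : K ≤ S := by
      refine le_iInf (fun n => le_trans (iInf_le _ n) ?_)
      exact Hsub_le (Hsub_isClosed x n) (fun l m hl => Hsub_mono x hl (hmem' l m).2)
    have hrKperp : ∀ (l : ℤ) (m : ℕ), p.1 l m ∈ Kᗮ := fun l m =>
      Submodule.orthogonal_le (iInf_le (fun m : ℤ => Hsub p.2 m) 0)
        (mem_orthogonal_Hsub horth' l m 0)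
    have hSK : ∀ v ∈ S, v ∈ K := by
      intro v hv
      exact absorb hsum' hKclosed 0 (fun l m _ => hsing' l m) hrKperp hreg'
        (fun m => (Submodule.mem_iInf _).mp hv m)
    have hmem2 : p.2 j k ∈ S := hKS (hsing' j k)
    have hperp : x j k - p.2 j k ∈ Sᗮ := by
      have hx1 : x j k - p.2 j k = p.1 j k := by rw [hsum' j k]; abel
      rw [hx1, Submodule.mem_orthogonal']
      intro v hv
      exact (Submodule.mem_orthogonal' K _).mp (hrKperp j k) v (hSK v hv)
    exact ⟨hmem2, hperp⟩
  refine ⟨⟨(r, s), hpair, ?_⟩, hkey⟩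
  -- uniqueness
  intro p hp
  have h2 : p.2 = s := by
    funext j k
    exact (Submodule.eq_starProjection_of_mem_orthogonal (hkey p hp j k).1 (hkey p hp j k).2).symm
  have h1 : p.1 = r := by
    funext j k
    have := hp.1 j k
    have hx1 : p.1 j k = x j k - p.2 j k := by rw [this]; abel
    rw [hx1, h2]
  rw [Prod.ext_iff]
  exact ⟨h1, h2⟩
end

section
/- Let H be a complex Hilbert space, M ≥ 1, and let (ε(u, m))_{u ∈ ℤ, m ∈ Fin M} be an orthonormal family in H. Let d : ℕ → ℕ → Fin M → ℂ, written d_{km}(p), satisfy Σ_{p, k, m} |d_{km}(p)|² < ∞, and define the one-sided moving average ζ(j)(k) := Σ_{u ≤ j} Σ_m d_{km}(j − u) · ε(u, m) (the series converges in H). Let a : ℕ → ℕ → ℂ, written a_{kj}, satisfy Σ_j (Σ_k |a_{kj}|²)^{1/2} < ∞. Then the family (a_{kj} ζ(j)(k))_{j ≥ 0, k} is absolutely summable in H, and its sum Aζ := Σ_{j ≥ 0} Σ_k a_{kj} ζ(j)(k) admits the orthogonal expansion Aζ = Σ_{u ∈ ℤ} Σ_{m} c(u, m) · ε(u, m), where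 c(u, m) := Σ_{j ≥ max(u, 0)} Σ_k a_{kj} d_{km}(j − u) is absolutely convergent for each (u, m) and the family (c(u, m))_{u ∈ ℤ, m} is square-summable. -/
open scoped ComplexConjugate

section helpers

local notation "⟪" x ", " y "⟫" => @inner ℂ _ _ x y

variable {H : Type*} [NormedAddCommGroup H] [InnerProductSpace ℂ H]

theorem mafe_coeff {ι : Type*} {v : ι → H} (hv : Orthonormal ℂ v) {f : ι → ℂ} {x : H}
    (h : HasSum (fun i => f i • v i) x) (i0 : ι) : ⟪v i0, x⟫ = f i0 := by
  classical
  have h1 : HasSum (fun i => ⟪v i0, f i • v i⟫) ⟪v i0, x⟫ := (innerSL ℂ (v i0)).hasSum h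
  have heq : (fun i => ⟪v i0, f i • v i⟫) = fun i => if i = i0 then f i0 else 0 := by
    funext i
    rw [inner_smul_right, orthonormal_iff_ite.mp hv]
    by_cases hi : i = i0
    · simp [hi]
    · simp [hi, Ne.symm hi]
  rw [heq] at h1
  exact h1.unique (hasSum_ite_eq i0 (f i0))

theorem mafe_normsq {ι : Type*} {v : ι → H} (hv : Orthonormal ℂ v) {f : ι → ℂ} {x : H}
    (h : HasSum (fun i => f i • v i) x) : HasSum (fun i => ‖f i‖ ^ 2) (‖x‖ ^ 2) := by
  have h1 : HasSum (fun i => ⟪x, f i • v i⟫) ⟪x, x⟫ := (innerSL ℂ x).hasSum h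
  have heq : (fun i => ⟪x, f i • v i⟫) = fun i => ((‖f i‖ ^ 2 : ℝ) : ℂ) := by
    funext i
    rw [inner_smul_right, ← inner_conj_symm, mafe_coeff hv h i, Complex.mul_conj,
      Complex.normSq_eq_norm_sq]
  rw [heq] at h1
  have h2 := h1.mapL Complex.reCLM
  have h3 : (fun i => Complex.reCLM ((‖f i‖ ^ 2 : ℝ) : ℂ)) = fun i => ‖f i‖ ^ 2 := by
    funext i; simp only [Complex.reCLM_apply, Complex.ofReal_re]
  rw [h3] at h2
  have h4 : (⟪x, x⟫).re = ‖x‖ ^ 2 := by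
    simpa using inner_self_eq_norm_sq (𝕜 := ℂ) x
  rwa [Complex.reCLM_apply, h4] at h2

theorem mafe_cs {f g : ℕ → ℝ} (hf0 : ∀ k, 0 ≤ f k) (hg0 : ∀ k, 0 ≤ g k)
    (hf : Summable (fun k => f k ^ 2)) (hg : Summable fun k => g k ^ 2) :
    Summable (fun k => f k * g k) ∧
      ∑' k, f k * g k ≤ Real.sqrt (∑' k, f k ^ 2) * Real.sqrt (∑' k, g k ^ 2) := by
  have hsum : Summable (fun k => f k * g k) := by
    refine Summable.of_nonneg_of_le (fun k => mul_nonneg (hf0 k) (hg0 k))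
      (fun k => ?_) ((hf.add hg).mul_right (1/2))
    have := two_mul_le_add_sq (f k) (g k)
    nlinarith
  refine ⟨hsum, Summable.tsum_le_of_sum_le hsum fun s => ?_⟩
  have h1 : (∑ k ∈ s, f k * g k) ^ 2 ≤ (∑ k ∈ s, f k ^ 2) * ∑ k ∈ s, g k ^ 2 :=
    Finset.sum_mul_sq_le_sq_mul_sq s f g
  have hs1 : ∑ k ∈ s, f k ^ 2 ≤ ∑' k, f k ^ 2 := Summable.sum_le_tsum s (fun _ _ => sq_nonneg _) hf
  have hs2 : ∑ k ∈ s, g k ^ 2 ≤ ∑' k, g k ^ 2 := Summable.sum_le_tsum s (fun _ _ => sq_nonneg _) hg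
  have hnn : (0:ℝ) ≤ ∑ k ∈ s, f k * g k :=
    Finset.sum_nonneg fun k _ => mul_nonneg (hf0 k) (hg0 k)
  calc ∑ k ∈ s, f k * g k = Real.sqrt ((∑ k ∈ s, f k * g k) ^ 2) := (Real.sqrt_sq hnn).symm
    _ ≤ Real.sqrt ((∑' k, f k ^ 2) * ∑' k, g k ^ 2) := by
        apply Real.sqrt_le_sqrt
        refine h1.trans (mul_le_mul hs1 hs2 (Finset.sum_nonneg fun k _ => sq_nonneg _)
          (tsum_nonneg fun _ => sq_nonneg _))
    _ = Real.sqrt (∑' k, f k ^ 2) * Real.sqrt (∑' k, g k ^ 2) :=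
        Real.sqrt_mul (tsum_nonneg fun _ => sq_nonneg _) _

theorem mafe_hasSum_mem {ι : Type*} (K : Submodule ℂ H) (hK : IsClosed (K : Set H))
    {f : ι → H} {x : H} (h : HasSum f x) (hf : ∀ i, f i ∈ K) : x ∈ K :=
  hK.mem_of_tendsto h (Filter.Eventually.of_forall fun s => Submodule.sum_mem K fun i _ => hf i)

def mafeEquiv (M : ℕ) (j : ℤ) : ({u : ℤ // u ≤ j} × Fin M) ≃ (ℕ × Fin M) where
  toFun q := ((j - (q.1 : ℤ)).toNat, q.2)
  invFun p := (⟨j - (p.1 : ℕ), by omega⟩, p.2)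
  left_inv := by
    rintro ⟨⟨u, hu⟩, m⟩
    simp only [Prod.mk.injEq, Subtype.mk.injEq]
    exact ⟨by omega, trivial⟩
  right_inv := by
    rintro ⟨p, m⟩
    simp only [Prod.mk.injEq]
    exact ⟨by omega, trivial⟩

def mafeEquiv2 (u : ℤ) : ({j : ℕ // u ≤ (j : ℤ)} × ℕ) ≃ {p : ℕ × ℕ // u ≤ ((p.1 : ℕ) : ℤ)} where
  toFun q := ⟨((q.1 : ℕ), q.2), q.1.2⟩
  invFun p := (⟨p.1.1, p.2⟩, p.1.2)
  left_inv := by rintro ⟨⟨j, hj⟩, k⟩; rfl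
  right_inv := by rintro ⟨⟨j, k⟩, hj⟩; rfl

end helpers

/-- Let `(ε(u,m))` be orthonormal in a complex Hilbert space `H`, let
`d k p m` (representing `d_{km}(p)`) be square-summable, and let
`ζ j k = Σ_{u ≤ j} Σ_m d k (j−u) m • ε u m`.  If `Σ_j (Σ_k |a k j|²)^{1/2} < ∞` then the
family `(a k j • ζ j k)_{(j,k)}` is absolutely summable, each coefficient
`c u m = Σ_{j ≥ max(u,0)} Σ_k a k j d k (j−u) m` converges absolutely, the family
`(c u m)` is square-summable, and `Σ_{j,k} a k j • ζ j k = Σ_{u,m} c u m • ε u m`. -/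
theorem moving_average_functional_expansion
    {H : Type*} [NormedAddCommGroup H] [InnerProductSpace ℂ H] [CompleteSpace H]
    (M : ℕ) (hM : 1 ≤ M) (ε : ℤ → Fin M → H)
    (hε : Orthonormal ℂ (fun q : ℤ × Fin M => ε q.1 q.2))
    (d : ℕ → ℕ → Fin M → ℂ)
    (hd : Summable (fun t : ℕ × ℕ × Fin M => ‖d t.1 t.2.1 t.2.2‖ ^ 2))
    (ζ : ℤ → ℕ → H)
    (hζ : ∀ (j : ℤ) (k : ℕ),
      HasSum (fun q : {u : ℤ // u ≤ j} × Fin M =>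
        d k ((j - (q.1 : ℤ)).toNat) q.2 • ε (q.1 : ℤ) q.2) (ζ j k))
    (a : ℕ → ℕ → ℂ)
    (ha1 : ∀ j : ℕ, Summable (fun k => ‖a k j‖ ^ 2))
    (ha2 : Summable (fun j : ℕ => Real.sqrt (∑' k : ℕ, ‖a k j‖ ^ 2))) :
    Summable (fun p : ℕ × ℕ => ‖a p.2 p.1 • ζ (p.1 : ℤ) p.2‖) ∧
      (∀ (u : ℤ) (m : Fin M),
        Summable (fun q : {j : ℕ // u ≤ (j : ℤ)} × ℕ =>
          ‖a q.2 (q.1 : ℕ) * d q.2 ((((q.1 : ℕ) : ℤ) - u).toNat) m‖)) ∧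
      Summable (fun w : ℤ × Fin M =>
        ‖∑' q : {j : ℕ // w.1 ≤ (j : ℤ)} × ℕ,
            a q.2 (q.1 : ℕ) * d q.2 ((((q.1 : ℕ) : ℤ) - w.1).toNat) w.2‖ ^ 2) ∧
      HasSum (fun w : ℤ × Fin M =>
          (∑' q : {j : ℕ // w.1 ≤ (j : ℤ)} × ℕ,
            a q.2 (q.1 : ℕ) * d q.2 ((((q.1 : ℕ) : ℤ) - w.1).toNat) w.2) • ε w.1 w.2)
        (∑' p : ℕ × ℕ, a p.2 p.1 • ζ (p.1 : ℤ) p.2) := by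
  classical
  -- orthonormality of restricted families
  have hvj : ∀ j : ℤ, Orthonormal ℂ (fun q : {u : ℤ // u ≤ j} × Fin M => ε (q.1 : ℤ) q.2) := by
    intro j
    have hinj : Function.Injective
        (fun q : {u : ℤ // u ≤ j} × Fin M => ((q.1 : ℤ), q.2)) := by
      rintro ⟨⟨u1, h1⟩, m1⟩ ⟨⟨u2, h2⟩, m2⟩ h
      simp only [Prod.mk.injEq] at h
      obtain ⟨h1', h2'⟩ := h
      simp [Prod.ext_iff, Subtype.ext_iff, h1', h2']
    exact hε.comp _ hinj
  -- norm squared of ζ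
  have hDsq_each : ∀ k : ℕ, Summable (fun p : ℕ × Fin M => ‖d k p.1 p.2‖ ^ 2) := by
    intro k
    exact ((summable_prod_of_nonneg (fun t => sq_nonneg _)).mp hd).1 k
  set Dsq : ℕ → ℝ := fun k => ∑' p : ℕ × Fin M, ‖d k p.1 p.2‖ ^ 2 with hDsq_def
  have hDsq_summable : Summable Dsq :=
    ((summable_prod_of_nonneg (fun t => sq_nonneg _)).mp hd).2
  have hDsq_nonneg : ∀ k, 0 ≤ Dsq k := fun k => tsum_nonneg fun _ => sq_nonneg _
  set D : ℕ → ℝ := fun k => Real.sqrt (Dsq k) with hD_def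
  have hD_nonneg : ∀ k, 0 ≤ D k := fun k => Real.sqrt_nonneg _
  have hD_sq : ∀ k, D k ^ 2 = Dsq k := fun k => Real.sq_sqrt (hDsq_nonneg k)
  have hzeta_normsq : ∀ (j : ℤ) (k : ℕ), ‖ζ j k‖ ^ 2 = Dsq k := by
    intro j k
    have h1 : HasSum (fun q : {u : ℤ // u ≤ j} × Fin M =>
        ‖d k ((j - (q.1 : ℤ)).toNat) q.2‖ ^ 2) (‖ζ j k‖ ^ 2) :=
      mafe_normsq (hvj j) (hζ j k)
    have h2 : HasSum ((fun p : ℕ × Fin M => ‖d k p.1 p.2‖ ^ 2) ∘ (mafeEquiv M j)) (‖ζ j k‖ ^ 2) := by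
      exact h1
    rw [Equiv.hasSum_iff] at h2
    exact h2.tsum_eq.symm
  have hzeta_norm : ∀ (j : ℤ) (k : ℕ), ‖ζ j k‖ = D k := by
    intro j k
    show ‖ζ j k‖ = Real.sqrt (Dsq k)
    rw [← hzeta_normsq j k, Real.sqrt_sq (norm_nonneg _)]
  -- summability of the ℓ² CS bound
  have hD2sum : Summable (fun k => D k ^ 2) := by
    have : (fun k => D k ^ 2) = Dsq := funext hD_sq
    rw [this]; exact hDsq_summable
  have hcs : ∀ j : ℕ, Summable (fun k => ‖a k j‖ * D k) ∧
      ∑' k, ‖a k j‖ * D k ≤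
        Real.sqrt (∑' k, ‖a k j‖ ^ 2) * Real.sqrt (∑' k, D k ^ 2) :=
    fun j => mafe_cs (fun k => norm_nonneg _) hD_nonneg (ha1 j) hD2sum
  have hprod : Summable (fun p : ℕ × ℕ => ‖a p.2 p.1‖ * D p.2) := by
    refine (summable_prod_of_nonneg ?_).mpr ⟨fun j => (hcs j).1, ?_⟩
    · intro p; exact mul_nonneg (norm_nonneg _) (hD_nonneg _)
    · refine Summable.of_nonneg_of_le
        (fun j => tsum_nonneg fun k => mul_nonneg (norm_nonneg _) (hD_nonneg _))
        (fun j => (hcs j).2) (ha2.mul_right _)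
  have claim1 : Summable (fun p : ℕ × ℕ => ‖a p.2 p.1 • ζ (p.1 : ℤ) p.2‖) := by
    have heq : (fun p : ℕ × ℕ => ‖a p.2 p.1 • ζ (p.1 : ℤ) p.2‖)
        = fun p => ‖a p.2 p.1‖ * D p.2 := by
      funext p; rw [norm_smul, hzeta_norm]
    rw [heq]; exact hprod
  have hd_le_D : ∀ (k p : ℕ) (m : Fin M), ‖d k p m‖ ≤ D k := by
    intro k p m
    have h1 : ‖d k p m‖ ^ 2 ≤ Dsq k :=
      Summable.le_tsum (hDsq_each k) (p, m) (fun _ _ => sq_nonneg _)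
    have h2 := Real.sqrt_le_sqrt h1
    rwa [Real.sqrt_sq (norm_nonneg _)] at h2
  have claim2 : ∀ (u : ℤ) (m : Fin M),
      Summable (fun q : {j : ℕ // u ≤ (j : ℤ)} × ℕ =>
        ‖a q.2 (q.1 : ℕ) * d q.2 ((((q.1 : ℕ) : ℤ) - u).toNat) m‖) := by
    intro u m
    have hginj : Function.Injective
        (fun q : {j : ℕ // u ≤ (j : ℤ)} × ℕ => (((q.1 : ℕ), q.2) : ℕ × ℕ)) := by
      rintro ⟨⟨j1, h1⟩, k1⟩ ⟨⟨j2, h2⟩, k2⟩ h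
      simp only [Prod.mk.injEq] at h
      simp [Prod.ext_iff, Subtype.ext_iff, h.1, h.2]
    have hcomp : Summable ((fun p : ℕ × ℕ => ‖a p.2 p.1‖ * D p.2) ∘
        (fun q : {j : ℕ // u ≤ (j : ℤ)} × ℕ => (((q.1 : ℕ), q.2) : ℕ × ℕ))) :=
      hprod.comp_injective hginj
    refine Summable.of_nonneg_of_le (fun q => norm_nonneg _) (fun q => ?_) hcomp
    rw [norm_mul]
    exact mul_le_mul_of_nonneg_left (hd_le_D _ _ _) (norm_nonneg _)
  -- the sum x
  have hxsummable : Summable (fun p : ℕ × ℕ => a p.2 p.1 • ζ (p.1 : ℤ) p.2) :=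
    Summable.of_norm claim1
  set x := ∑' p : ℕ × ℕ, a p.2 p.1 • ζ (p.1 : ℤ) p.2 with hx_def
  have hxsum : HasSum (fun p : ℕ × ℕ => a p.2 p.1 • ζ (p.1 : ℤ) p.2) x := hxsummable.hasSum
  -- inner products with ζ
  have hinnerζ : ∀ (w : ℤ × Fin M) (j : ℤ) (k : ℕ),
      (inner ℂ (ε w.1 w.2) (ζ j k) : ℂ) =
        if w.1 ≤ j then d k ((j - w.1).toNat) w.2 else 0 := by
    intro w j k
    by_cases h : w.1 ≤ j
    · rw [if_pos h]
      exact mafe_coeff (hvj j) (hζ j k) ⟨⟨w.1, h⟩, w.2⟩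
    · rw [if_neg h]
      have h1 : HasSum (fun q : {u : ℤ // u ≤ j} × Fin M =>
          (inner ℂ (ε w.1 w.2) (d k ((j - (q.1 : ℤ)).toNat) q.2 • ε (q.1 : ℤ) q.2) : ℂ))
          (inner ℂ (ε w.1 w.2) (ζ j k)) := (innerSL ℂ (ε w.1 w.2)).hasSum (hζ j k)
      have heq : (fun q : {u : ℤ // u ≤ j} × Fin M =>
          (inner ℂ (ε w.1 w.2) (d k ((j - (q.1 : ℤ)).toNat) q.2 • ε (q.1 : ℤ) q.2) : ℂ))
          = fun _ => (0 : ℂ) := by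
        funext q
        rw [inner_smul_right]
        have hne : ((w.1, w.2) : ℤ × Fin M) ≠ (((q.1 : ℤ), q.2) : ℤ × Fin M) := by
          intro hc
          rw [Prod.ext_iff] at hc
          exact h (hc.1 ▸ q.1.2)
        have h2 := orthonormal_iff_ite.mp hε (w.1, w.2) (((q.1 : ℤ), q.2) : ℤ × Fin M)
        rw [if_neg hne] at h2
        rw [h2, mul_zero]
      rw [heq] at h1
      exact h1.unique hasSum_zero
  -- the coefficient identity
  have hcw : ∀ w : ℤ × Fin M,
      HasSum (fun q : {j : ℕ // w.1 ≤ (j : ℤ)} × ℕ =>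
        a q.2 (q.1 : ℕ) * d q.2 ((((q.1 : ℕ) : ℤ) - w.1).toNat) w.2)
        (inner ℂ (ε w.1 w.2) x : ℂ) := by
    intro w
    have h1 : HasSum (fun p : ℕ × ℕ =>
        (inner ℂ (ε w.1 w.2) (a p.2 p.1 • ζ (p.1 : ℤ) p.2) : ℂ)) (inner ℂ (ε w.1 w.2) x) :=
      (innerSL ℂ (ε w.1 w.2)).hasSum hxsum
    have heq : (fun p : ℕ × ℕ =>
        (inner ℂ (ε w.1 w.2) (a p.2 p.1 • ζ (p.1 : ℤ) p.2) : ℂ))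
        = fun p : ℕ × ℕ => Set.indicator {p : ℕ × ℕ | w.1 ≤ ((p.1 : ℕ) : ℤ)}
            (fun p : ℕ × ℕ => a p.2 p.1 * d p.2 ((((p.1 : ℕ) : ℤ) - w.1).toNat) w.2) p := by
      funext p
      rw [inner_smul_right, hinnerζ w (p.1 : ℤ) p.2, Set.indicator_apply]
      by_cases h : w.1 ≤ ((p.1 : ℕ) : ℤ)
      · rw [if_pos h]
        exact (if_pos h).symm
      · rw [if_neg h, mul_zero]
        exact (if_neg h).symm
    rw [heq] at h1
    have h2 : HasSum ((fun p : ℕ × ℕ =>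
        a p.2 p.1 * d p.2 ((((p.1 : ℕ) : ℤ) - w.1).toNat) w.2) ∘
        ((↑) : {p : ℕ × ℕ // w.1 ≤ ((p.1 : ℕ) : ℤ)} → ℕ × ℕ)) (inner ℂ (ε w.1 w.2) x : ℂ) := by
      exact (hasSum_subtype_iff_indicator
        (s := {p : ℕ × ℕ | w.1 ≤ ((p.1 : ℕ) : ℤ)})).mpr h1
    exact (Equiv.hasSum_iff (mafeEquiv2 w.1)).mpr h2
  have hc_eq : ∀ w : ℤ × Fin M,
      (∑' q : {j : ℕ // w.1 ≤ (j : ℤ)} × ℕ,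
        a q.2 (q.1 : ℕ) * d q.2 ((((q.1 : ℕ) : ℤ) - w.1).toNat) w.2)
      = (inner ℂ (ε w.1 w.2) x : ℂ) := fun w => (hcw w).tsum_eq
  -- claim 3
  have claim3 : Summable (fun w : ℤ × Fin M =>
      ‖∑' q : {j : ℕ // w.1 ≤ (j : ℤ)} × ℕ,
          a q.2 (q.1 : ℕ) * d q.2 ((((q.1 : ℕ) : ℤ) - w.1).toNat) w.2‖ ^ 2) := by
    have heq : (fun w : ℤ × Fin M =>
        ‖∑' q : {j : ℕ // w.1 ≤ (j : ℤ)} × ℕ,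
          a q.2 (q.1 : ℕ) * d q.2 ((((q.1 : ℕ) : ℤ) - w.1).toNat) w.2‖ ^ 2)
        = fun w => ‖(inner ℂ (ε w.1 w.2) x : ℂ)‖ ^ 2 := by
      funext w; rw [hc_eq w]
    rw [heq]
    exact Orthonormal.inner_products_summable x hε
  -- claim 4: the orthogonal expansion
  refine ⟨claim1, claim2, claim3, ?_⟩
  set K := (Submodule.span ℂ
      (Set.range (fun q : ℤ × Fin M => ε q.1 q.2))).topologicalClosure with hK_def
  have hKclosed : IsClosed (K : Set H) := Submodule.isClosed_topologicalClosure _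
  haveI : CompleteSpace K := hKclosed.completeSpace_coe
  have hmem : ∀ q : ℤ × Fin M, ε q.1 q.2 ∈ K := fun q =>
    Submodule.le_topologicalClosure _ (Submodule.subset_span ⟨q, rfl⟩)
  have hζK : ∀ (j : ℤ) (k : ℕ), ζ j k ∈ K := fun j k =>
    mafe_hasSum_mem K hKclosed (hζ j k) (fun q => K.smul_mem _ (hmem (((q.1 : ℤ), q.2))))
  have hxK : x ∈ K := mafe_hasSum_mem K hKclosed hxsum (fun p => K.smul_mem _ (hζK _ _))
  set v' : ℤ × Fin M → K := fun q => (⟨ε q.1 q.2, hmem q⟩ : K) with hv'_def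
  have hv' : Orthonormal ℂ v' := by
    rw [orthonormal_iff_ite]
    intro i j'
    rw [Submodule.coe_inner]
    exact orthonormal_iff_ite.mp hε i j'
  have himg : (Subtype.val '' ((Submodule.span ℂ (Set.range v') : Submodule ℂ K) : Set K))
      = ((Submodule.span ℂ
          (Set.range (fun q : ℤ × Fin M => ε q.1 q.2)) : Submodule ℂ H) : Set H) := by
    have h1 : Subtype.val '' ((Submodule.span ℂ (Set.range v') : Submodule ℂ K) : Set K)
        = ((Submodule.map K.subtype (Submodule.span ℂ (Set.range v'))
            : Submodule ℂ H) : Set H) := by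
      rw [Submodule.map_coe]; rfl
    rw [h1, Submodule.map_span]
    congr 1
    rw [← Set.range_comp]
    rfl
  have hsp : ⊤ ≤ (Submodule.span ℂ (Set.range v')).topologicalClosure := by
    intro y _
    rw [← SetLike.mem_coe, Submodule.topologicalClosure_coe, closure_subtype, himg]
    have h7 : (y : H) ∈ ((Submodule.span ℂ
        (Set.range (fun q : ℤ × Fin M => ε q.1 q.2))).topologicalClosure : Set H) := y.2
    rwa [Submodule.topologicalClosure_coe] at h7
  set b : HilbertBasis (ℤ × Fin M) ℂ K := HilbertBasis.mk hv' hsp with hb_def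
  have hb : ⇑b = v' := HilbertBasis.coe_mk hv' hsp
  have hproj : HasSum (fun w : ℤ × Fin M =>
      (inner ℂ ((b w : H)) x : ℂ) • b w) (K.orthogonalProjectionOnto x) :=
    b.hasSum_orthogonalProjection x
  have h5 := hproj.mapL K.subtypeL
  have h6 : HasSum (fun w : ℤ × Fin M =>
      (inner ℂ (ε w.1 w.2) x : ℂ) • ε w.1 w.2) ((K.orthogonalProjectionOnto x : K) : H) := by
    convert h5 using 2 with w
    rw [map_smul, hb]
    simp [Submodule.subtypeL_apply, hv'_def]
    rfl
  rw [← K.starProjection_apply, Submodule.starProjection_eq_self_iff.mpr hxK] at h6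
  have heqfun : (fun w : ℤ × Fin M =>
      (∑' q : {j : ℕ // w.1 ≤ (j : ℤ)} × ℕ,
        a q.2 (q.1 : ℕ) * d q.2 ((((q.1 : ℕ) : ℤ) - w.1).toNat) w.2) • ε w.1 w.2)
      = fun w : ℤ × Fin M => (inner ℂ (ε w.1 w.2) x : ℂ) • ε w.1 w.2 := by
    funext w; rw [hc_eq w]
  rw [heqfun]
  exact h6
end

section
/- (Hilbert-space core of Theorem 3.2.3, formula (26).) Let H be a complex Hilbert space, M ≥ 1, (ε(u, m))_{u ∈ ℤ, m ∈ Fin M} an orthonormal family in H, and d : ℕ → ℕ → Fin M → ℂ with Σ_{p,k,m} |d_{km}(p)|² < ∞. Define ζ(j)(k) := Σ_{u ≤ j} Σ_m d_{km}(j − u) ε(u, m). Let a_{kj} (k ∈ ℕ, j ≥ 0) satisfy Σ_j (Σ_k |a_{kj}|²)^{1/2} < ∞ and set Aζ := Σ_{j ≥ 0} Σ_k a_{kj} ζ(j)(k). Assume the representation is canonical: the closed linear span of {ζ(j)(k) : j ≤ −1, k ∈ ℕ} equals the closed linear span S of {ε(u, m) : u ≤ −1, m ∈ Fin M}. Then the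 squared distance from Aζ to S equals Σ_{l ≥ 0} Σ_m |(Ad)_{l,m}|², where (Ad)_{l,m} := Σ_{j ≥ l} Σ_k a_{kj} d_{km}(j − l); moreover the orthogonal projection of Aζ onto S (the optimal linear estimate) is Σ_{u ≤ −1} Σ_m c(u, m) ε(u, m) with c(u, m) = Σ_{j ≥ 0} Σ_k a_{kj} d_{km}(j − u). -/
open scoped ComplexConjugate

/-- If `x = Σ f q • u q` and `e` is orthogonal to every `u q`, then `⟪e, x⟫ = 0`. -/
lemma inner_hasSum_zero_aux
    {H : Type*} [NormedAddCommGroup H] [InnerProductSpace ℂ H]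
    {κ : Type*} {u : κ → H} {f : κ → ℂ} {x e : H}
    (hx : HasSum (fun q => f q • u q) x) (he : ∀ q, (inner ℂ e (u q) : ℂ) = 0) :
    (inner ℂ e x : ℂ) = 0 := by
  have h1 := hx.mapL (innerSL ℂ e)
  have h2 : (fun q => (innerSL ℂ e) (f q • u q)) = fun _ => (0 : ℂ) := by
    funext q; simp [inner_smul_right, he q]
  rw [h2] at h1
  exact h1.unique hasSum_zero

/-- If `x = Σ f q • u q` and `u q₀` is orthonormal against the family, then
`⟪u q₀, x⟫ = f q₀`. -/
lemma inner_hasSum_eq_aux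
    {H : Type*} [NormedAddCommGroup H] [InnerProductSpace ℂ H]
    {κ : Type*} {u : κ → H} {f : κ → ℂ} {x : H}
    (hx : HasSum (fun q => f q • u q) x) (q₀ : κ)
    (h1' : (inner ℂ (u q₀) (u q₀) : ℂ) = 1)
    (h0 : ∀ q, q ≠ q₀ → (inner ℂ (u q₀) (u q) : ℂ) = 0) :
    (inner ℂ (u q₀) x : ℂ) = f q₀ := by
  classical
  have h1 := hx.mapL (innerSL ℂ (u q₀))
  have h2 : (fun q => (innerSL ℂ (u q₀)) (f q • u q))
      = fun q => if q = q₀ then f q₀ else 0 := by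
    funext q; by_cases hq : q = q₀
    · subst hq; rw [innerSL_apply_apply, inner_smul_right, h1', mul_one, if_pos rfl]
    · simp [inner_smul_right, h0 q hq, hq]
  rw [h2] at h1
  exact h1.unique (hasSum_ite_eq q₀ (f q₀))

/-- **core of Theorem 3.2.3, formula (26).** -/
theorem moving_average_extrapolation_error
    {H : Type*} [NormedAddCommGroup H] [InnerProductSpace ℂ H] [CompleteSpace H]
    (M : ℕ) (hM : 1 ≤ M) (ε : ℤ → Fin M → H)
    (hε : Orthonormal ℂ (fun q : ℤ × Fin M => ε q.1 q.2))
    (d : ℕ → ℕ → Fin M → ℂ)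
    (hd : Summable (fun t : ℕ × ℕ × Fin M => ‖d t.1 t.2.1 t.2.2‖ ^ 2))
    (ζ : ℤ → ℕ → H)
    (hζ : ∀ (j : ℤ) (k : ℕ),
      HasSum (fun q : {u : ℤ // u ≤ j} × Fin M =>
        d k ((j - (q.1 : ℤ)).toNat) q.2 • ε (q.1 : ℤ) q.2) (ζ j k))
    (a : ℕ → ℕ → ℂ)
    (ha1 : ∀ j : ℕ, Summable (fun k => ‖a k j‖ ^ 2))
    (ha2 : Summable (fun j : ℕ => Real.sqrt (∑' k : ℕ, ‖a k j‖ ^ 2)))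
    (S : Submodule ℂ H)
    (hS : S = (Submodule.span ℂ
      (Set.range fun q : {u : ℤ // u ≤ -1} × Fin M => ε (q.1 : ℤ) q.2)).topologicalClosure)
    (hcanon : (Submodule.span ℂ
      {v : H | ∃ (j : ℤ) (k : ℕ), j ≤ -1 ∧ ζ j k = v}).topologicalClosure = S)
    (Aζ : H) (hAζ : HasSum (fun p : ℕ × ℕ => a p.2 p.1 • ζ (p.1 : ℤ) p.2) Aζ)
    (c : ℤ → Fin M → ℂ)
    (hc : ∀ (u : ℤ) (m : Fin M),
      c u m = ∑' p : ℕ × ℕ, a p.2 p.1 * d p.2 ((((p.1 : ℕ) : ℤ) - u).toNat) m)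
    (y : H)
    (hy : HasSum (fun q : {u : ℤ // u ≤ -1} × Fin M => c (q.1 : ℤ) q.2 • ε (q.1 : ℤ) q.2) y) :
    (Metric.infDist Aζ (S : Set H)) ^ 2
        = ∑' w : ℕ × Fin M,
            ‖∑' p : {j : ℕ // w.1 ≤ j} × ℕ,
              a p.2 (p.1 : ℕ) * d p.2 ((p.1 : ℕ) - w.1) w.2‖ ^ 2 ∧
      y ∈ S ∧ ∀ v ∈ S, (inner ℂ (Aζ - y) v : ℂ) = 0 := by
  classical
  set v : ℤ × Fin M → H := fun q => ε q.1 q.2 with hv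
  have hvinj : Function.Injective v := hε.linearIndependent.injective
  have hδ : ∀ q q' : ℤ × Fin M, (inner ℂ (v q) (v q') : ℂ) = if q = q' then 1 else 0 :=
    fun q q' => orthonormal_iff_ite.mp hε q q'
  have hδ1 : ∀ q : ℤ × Fin M, (inner ℂ (v q) (v q) : ℂ) = 1 := by
    intro q; rw [hδ]; simp
  have hδ0 : ∀ q q' : ℤ × Fin M, q ≠ q' → (inner ℂ (v q) (v q') : ℂ) = 0 := by
    intro q q' h; rw [hδ]; simp [h]
  -- inner products with ζ
  have hinnerζ : ∀ (u : ℤ) (m : Fin M) (j : ℤ) (k : ℕ),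
      (inner ℂ (v (u, m)) (ζ j k) : ℂ)
        = if u ≤ j then d k ((j - u).toNat) m else 0 := by
    intro u m j k
    by_cases h : u ≤ j
    · rw [if_pos h]
      exact inner_hasSum_eq_aux (u := fun q' : {u' : ℤ // u' ≤ j} × Fin M => v ((q'.1 : ℤ), q'.2))
        (hζ j k) ⟨⟨u, h⟩, m⟩ (hδ1 _) (fun q' hq' => hδ0 _ _ (by
          rintro hcontra
          apply hq'
          obtain ⟨h1, h2⟩ := Prod.mk.injEq .. ▸ hcontra
          exact Prod.ext (Subtype.ext h1.symm) h2.symm))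
    · rw [if_neg h]
      exact inner_hasSum_zero_aux (u := fun q' : {u' : ℤ // u' ≤ j} × Fin M => v ((q'.1 : ℤ), q'.2))
        (hζ j k) (fun q' => hδ0 _ _ (by
          rintro hcontra
          obtain ⟨h1, h2⟩ := Prod.mk.injEq .. ▸ hcontra
          exact h (h1 ▸ q'.1.2)))
  -- inner products with Aζ
  have hβ : ∀ (u : ℤ) (m : Fin M),
      HasSum (fun p : ℕ × ℕ => a p.2 p.1 *
          (if u ≤ (p.1 : ℤ) then d p.2 (((p.1 : ℤ) - u).toNat) m else 0))
        (inner ℂ (v (u, m)) Aζ : ℂ) := by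
    intro u m
    have h1 := hAζ.mapL (innerSL ℂ (v (u, m)))
    have h2 : (fun p : ℕ × ℕ => (innerSL ℂ (v (u, m))) (a p.2 p.1 • ζ (p.1 : ℤ) p.2))
        = fun p : ℕ × ℕ => a p.2 p.1 *
          (if u ≤ (p.1 : ℤ) then d p.2 (((p.1 : ℤ) - u).toNat) m else 0) := by
      funext p
      rw [innerSL_apply_apply, inner_smul_right, hinnerζ]
    rwa [h2] at h1
  -- inner products with y
  have hy_past : ∀ (u : ℤ) (hu : u ≤ -1) (m : Fin M), (inner ℂ (v (u, m)) y : ℂ) = c u m := by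
    intro u hu m
    exact inner_hasSum_eq_aux
      (u := fun q' : {u' : ℤ // u' ≤ -1} × Fin M => v ((q'.1 : ℤ), q'.2))
      hy ⟨⟨u, hu⟩, m⟩ (hδ1 _) (fun q' hq' => hδ0 _ _ (by
        rintro hcontra
        apply hq'
        obtain ⟨h1, h2⟩ := Prod.mk.injEq .. ▸ hcontra
        exact Prod.ext (Subtype.ext h1.symm) h2.symm))
  have hy_fut : ∀ (u : ℤ), ¬ u ≤ -1 → ∀ m : Fin M, (inner ℂ (v (u, m)) y : ℂ) = 0 := by
    intro u hu m
    exact inner_hasSum_zero_aux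
      (u := fun q' : {u' : ℤ // u' ≤ -1} × Fin M => v ((q'.1 : ℤ), q'.2))
      hy (fun q' => hδ0 _ _ (by
        rintro hcontra
        obtain ⟨h1, h2⟩ := Prod.mk.injEq .. ▸ hcontra
        exact hu (h1 ▸ q'.1.2)))
  set z : H := Aζ - y with hzdef
  -- past coefficients of z vanish
  have hz_past : ∀ (u : ℤ), u ≤ -1 → ∀ m : Fin M, (inner ℂ (v (u, m)) z : ℂ) = 0 := by
    intro u hu m
    have hA : (inner ℂ (v (u, m)) Aζ : ℂ) = c u m := by
      have h1 := hβ u m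
      have h2 : (fun p : ℕ × ℕ => a p.2 p.1 *
          (if u ≤ (p.1 : ℤ) then d p.2 (((p.1 : ℤ) - u).toNat) m else 0))
          = fun p : ℕ × ℕ => a p.2 p.1 * d p.2 ((((p.1 : ℕ) : ℤ) - u).toNat) m := by
        funext p
        rw [if_pos (by omega : u ≤ ((p.1 : ℕ) : ℤ))]
      rw [h2] at h1
      rw [hc u m, h1.tsum_eq]
    rw [hzdef, inner_sub_right, hA, hy_past u hu m, sub_self]
  -- future coefficients of z are the target tsum
  have hcoef : ∀ (l : ℕ) (m : Fin M),
      (inner ℂ (v ((l : ℤ), m)) z : ℂ)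
        = ∑' p : {j : ℕ // l ≤ j} × ℕ, a p.2 (p.1 : ℕ) * d p.2 ((p.1 : ℕ) - l) m := by
    intro l m
    have h0 : (inner ℂ (v ((l : ℤ), m)) z : ℂ) = inner ℂ (v ((l : ℤ), m)) Aζ := by
      rw [hzdef, inner_sub_right, hy_fut (l : ℤ) (by omega) m, sub_zero]
    have h1 := hβ (l : ℤ) m
    have hss : Function.support (fun p : ℕ × ℕ => a p.2 p.1 *
        (if (l : ℤ) ≤ (p.1 : ℤ) then d p.2 (((p.1 : ℤ) - (l : ℤ)).toNat) m else 0))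
        ⊆ {p : ℕ × ℕ | l ≤ p.1} := by
      intro p hp
      by_contra hlp
      apply hp
      simp only [Set.mem_setOf_eq] at hlp
      have hlp' : ¬ ((l : ℤ) ≤ ((p.1 : ℕ) : ℤ)) := by exact_mod_cast hlp
      simp only [hlp', if_false, mul_zero]
    have h2 := (hasSum_subtype_iff_of_support_subset hss).mpr h1
    let e : ({j : ℕ // l ≤ j} × ℕ) ≃ {p : ℕ × ℕ // p ∈ {p : ℕ × ℕ | l ≤ p.1}} :=
      { toFun := fun x => ⟨(x.1.1, x.2), x.1.2⟩
        invFun := fun p => (⟨p.1.1, p.2⟩, p.1.2)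
        left_inv := fun x => rfl
        right_inv := fun p => rfl }
    have h3 := (Equiv.hasSum_iff e).mpr h2
    have h4 : ((fun p : ℕ × ℕ => a p.2 p.1 *
        (if (l : ℤ) ≤ (p.1 : ℤ) then d p.2 (((p.1 : ℤ) - (l : ℤ)).toNat) m else 0))
          ∘ Subtype.val) ∘ ⇑e
        = fun p : {j : ℕ // l ≤ j} × ℕ => a p.2 (p.1 : ℕ) * d p.2 ((p.1 : ℕ) - l) m := by
      funext x
      obtain ⟨⟨j, hj⟩, k⟩ := x
      show a k j * (if (l : ℤ) ≤ ((j : ℕ) : ℤ) then d k (((j : ℤ) - (l : ℤ)).toNat) m else 0)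
          = a k j * d k (j - l) m
      rw [if_pos (by exact_mod_cast hj), Int.toNat_sub]
    rw [h4] at h3
    rw [h0, ← h3.tsum_eq]
  -- y ∈ S
  have hScl : IsClosed (S : Set H) := by
    rw [hS]; exact Submodule.isClosed_topologicalClosure _
  have hyS : y ∈ S := by
    refine hScl.mem_of_tendsto hy (Filter.Eventually.of_forall fun s => ?_)
    simp only [SetLike.mem_coe]
    refine Submodule.sum_mem _ fun q _ => Submodule.smul_mem _ _ ?_
    rw [hS]
    exact Submodule.le_topologicalClosure _ (Submodule.subset_span ⟨q, rfl⟩)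
  -- orthogonality
  have horth : ∀ v' ∈ S, (inner ℂ z v' : ℂ) = 0 := by
    have hle : S ≤ LinearMap.ker (innerSL ℂ z : H →ₗ[ℂ] ℂ) := by
      rw [hS]
      refine Submodule.topologicalClosure_minimal _ ?_ (ContinuousLinearMap.isClosed_ker _)
      rw [Submodule.span_le]
      rintro x ⟨q, rfl⟩
      simp only [SetLike.mem_coe, LinearMap.mem_ker]
      have h0 := hz_past (q.1 : ℤ) q.1.2 q.2
      rw [ContinuousLinearMap.coe_coe, innerSL_apply_apply, ← inner_conj_symm, h0, map_zero]
    intro v' hv'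
    exact hle hv'
  -- the Hilbert basis extension
  obtain ⟨w, b, hsw, hbcoe⟩ := hε.toSubtypeRange.exists_hilbertBasis_extension
  have horto : Orthonormal ℂ ((↑) : w → H) := hbcoe ▸ b.orthonormal
  have hwδ : ∀ (i : w), (i : H) ∉ Set.range v → ∀ q, (inner ℂ (i : H) (v q) : ℂ) = 0 := by
    intro i hi q
    have hj : v q ∈ w := hsw ⟨q, rfl⟩
    have := orthonormal_iff_ite.mp horto i ⟨v q, hj⟩
    rw [this, if_neg]
    intro hcontra
    exact hi ⟨q, (congrArg Subtype.val hcontra).symm⟩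
  have hw_z : ∀ (i : w), (i : H) ∉ Set.range v → (inner ℂ (i : H) z : ℂ) = 0 := by
    intro i hi
    have hAi : (inner ℂ (i : H) Aζ : ℂ) = 0 := by
      refine inner_hasSum_zero_aux hAζ fun p => ?_
      exact inner_hasSum_zero_aux (hζ (p.1 : ℤ) p.2) fun q' => hwδ i hi ((q'.1 : ℤ), q'.2)
    have hyi : (inner ℂ (i : H) y : ℂ) = 0 :=
      inner_hasSum_zero_aux hy fun q' => hwδ i hi ((q'.1 : ℤ), q'.2)
    rw [hzdef, inner_sub_right, hAi, hyi, sub_zero]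
  -- Parseval for z
  have hP : HasSum (fun i : w => ‖(inner ℂ ((i : H)) z : ℂ)‖ ^ 2) (‖z‖ ^ 2) := by
    have h1 := b.hasSum_inner_mul_inner z z
    have h2 : (fun i : w => (inner ℂ z (b i) : ℂ) * inner ℂ (b i) z)
        = fun i : w => ((‖(inner ℂ ((i : H)) z : ℂ)‖ ^ 2 : ℝ) : ℂ) := by
      funext i
      have hb : b i = (i : H) := congrFun hbcoe i
      rw [hb, ← inner_conj_symm z ((i : H)), RCLike.conj_mul]
      norm_cast
    rw [h2] at h1
    have h3 := h1.mapL Complex.reCLM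
    have h4 : (fun i : w => Complex.reCLM ((‖(inner ℂ ((i : H)) z : ℂ)‖ ^ 2 : ℝ) : ℂ))
        = fun i : w => ‖(inner ℂ ((i : H)) z : ℂ)‖ ^ 2 := by
      funext i; rw [Complex.reCLM_apply, Complex.ofReal_re]
    rw [h4] at h3
    have h5 : Complex.reCLM (inner ℂ z z : ℂ) = ‖z‖ ^ 2 := by
      rw [Complex.reCLM_apply, ← RCLike.re_to_complex]
      exact inner_self_eq_norm_sq (𝕜 := ℂ) z
    rwa [h5] at h3
  -- transfer Parseval to ℕ × Fin M
  let g : ℕ × Fin M → w := fun w' => ⟨v ((w'.1 : ℤ), w'.2), hsw ⟨((w'.1 : ℤ), w'.2), rfl⟩⟩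
  have hginj : Function.Injective g := by
    intro x x' hxx'
    have h1 : v ((x.1 : ℤ), x.2) = v ((x'.1 : ℤ), x'.2) := congrArg Subtype.val hxx'
    have h2 := hvinj h1
    obtain ⟨h3, h4⟩ := Prod.mk.injEq .. ▸ h2
    exact Prod.ext (by exact_mod_cast h3) h4
  have hsupp : ∀ i : w, i ∉ Set.range g → ‖(inner ℂ ((i : H)) z : ℂ)‖ ^ 2 = 0 := by
    intro i hi
    by_cases hir : (i : H) ∈ Set.range v
    · obtain ⟨q, hq⟩ := hir
      by_cases hq1 : q.1 ≤ -1
      · rw [← hq, show v q = v (q.1, q.2) from rfl, hz_past q.1 hq1 q.2]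
        simp
      · exfalso
        apply hi
        refine ⟨(q.1.toNat, q.2), ?_⟩
        apply Subtype.ext
        show v ((q.1.toNat : ℤ), q.2) = (i : H)
        rw [Int.toNat_of_nonneg (by omega), ← hq]
    · rw [hw_z i hir]
      simp
  have hPn : HasSum (fun w' : ℕ × Fin M => ‖(inner ℂ (v ((w'.1 : ℤ), w'.2)) z : ℂ)‖ ^ 2)
      (‖z‖ ^ 2) := (hginj.hasSum_iff hsupp).mpr hP
  -- distance
  have hdist : Metric.infDist Aζ (S : Set H) = ‖z‖ := by
    apply le_antisymm
    · have h1 := Metric.infDist_le_dist_of_mem (x := Aζ) hyS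
      rwa [dist_eq_norm] at h1
    · rw [Metric.infDist_eq_iInf]
      have : Nonempty (S : Set H) := ⟨⟨0, S.zero_mem⟩⟩
      refine le_ciInf fun x => ?_
      obtain ⟨v', hv'⟩ := x
      rw [dist_eq_norm]
      have hzy : Aζ - v' = z + (y - v') := by rw [hzdef]; abel
      have hp : ‖Aζ - v'‖ ^ 2 = ‖z‖ ^ 2 + ‖y - v'‖ ^ 2 := by
        rw [hzy, @norm_add_sq ℂ, horth (y - v') (Submodule.sub_mem S hyS hv')]
        simp
      nlinarith [norm_nonneg (Aζ - v'), norm_nonneg z, sq_nonneg ‖y - v'‖]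
  refine ⟨?_, hyS, horth⟩
  rw [hdist, ← hPn.tsum_eq]
  exact tsum_congr fun w' => by rw [hcoef w'.1 w'.2]
end

section
/- (Hilbert-space core of Corollary 3.2.2, formula (28).) Let H be a complex Hilbert space, M ≥ 1, (ε(u, m))_{u ∈ ℤ, m ∈ Fin M} an orthonormal family in H, and d : ℕ → ℕ → Fin M → ℂ with Σ_{p,k,m} |d_{km}(p)|² < ∞. Define ζ(j)(k) := Σ_{u ≤ j} Σ_m d_{km}(j − u) ε(u, m). Let N ≥ 0 and let a_{kj} (k ∈ ℕ, 0 ≤ j ≤ N) satisfy Σ_k |a_{kj}|² < ∞ for each j, and set A_N ζ := Σ_{j=0}^N Σ_k a_{kj} ζ(j)(k). Assume the closed linear span of {ζ(j)(k) : j ≤ −1, k ∈ ℕ} equals the closed linear span S of {ε(u, m) : u ≤ −1, m ∈ Fin M}. Then the squared distance from A_N ζ to S equals Σ_{l=0}^N Σ_m |(A_N d)_{l,m}|², where (A_N d)_{l,m} := Σ_{j=l}^N Σ_k a_{kj} d_{km}(j − l). -/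
open scoped ComplexConjugate

set_option maxHeartbeats 1000000

private lemma aux_hasSum_normSq {H : Type*} [NormedAddCommGroup H]
    [InnerProductSpace ℂ H] {ι : Type*} [DecidableEq ι] {e : ι → H} (he : Orthonormal ℂ e)
    {c : ι → ℂ} {x : H} (h : HasSum (fun i => c i • e i) x) :
    HasSum (fun i => ‖c i‖ ^ 2) (‖x‖ ^ 2) := by
  have hco : ∀ i, (inner ℂ (e i) x : ℂ) = c i := by
    intro i
    have h1 : HasSum (fun j => (inner ℂ (e i) (c j • e j) : ℂ)) (inner ℂ (e i) x) :=
      (innerSL ℂ (e i)).hasSum h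
    have h2 : HasSum (fun j => (inner ℂ (e i) (c j • e j) : ℂ)) (c i) := by
      have heq : (fun j => (inner ℂ (e i) (c j • e j) : ℂ)) =
          fun j => if j = i then c i else 0 := by
        funext j
        rw [inner_smul_right]
        rcases eq_or_ne j i with rfl | hj
        · simp [inner_self_eq_norm_sq_to_K, he.1 j]
        · rw [he.2 (Ne.symm hj)]; simp [hj]
      rw [heq]
      exact hasSum_ite_eq i (c i)
    exact h1.unique h2
  have h3 : HasSum (fun i => (inner ℂ x (c i • e i) : ℂ)) (inner ℂ x x) :=
    (innerSL ℂ x).hasSum h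
  have h4 : (fun i => (inner ℂ x (c i • e i) : ℂ)) = fun i => ((‖c i‖ ^ 2 : ℝ) : ℂ) := by
    funext i
    rw [inner_smul_right, ← inner_conj_symm, hco i, mul_comm, RCLike.conj_mul]
    norm_cast
  rw [h4] at h3
  have h5 : HasSum (fun i => ‖c i‖ ^ 2) (Complex.re (inner ℂ x x)) := by
    have h7 := Complex.reCLM.hasSum h3
    simpa only [Complex.reCLM_apply, Complex.ofReal_re] using h7
  have h6 : Complex.re (inner ℂ x x : ℂ) = ‖x‖ ^ 2 := @inner_self_eq_norm_sq ℂ _ _ _ _ x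
  rwa [h6] at h5

private lemma aux_tsum_mem_of_closed {H : Type*} [NormedAddCommGroup H]
    [InnerProductSpace ℂ H] (S : Submodule ℂ H) (hSc : IsClosed (S : Set H))
    {ι : Type*} {f : ι → H} (hf : Summable f) (hmem : ∀ i, f i ∈ S) :
    (∑' i, f i) ∈ S :=
  hSc.mem_of_tendsto hf.hasSum
    (Filter.Eventually.of_forall fun s => S.sum_mem fun i _ => hmem i)

/-- **core of Corollary 3.2.2, formula (28).** For the one-sided moving average
`ζ j k = Σ_{u ≤ j} Σ_m d k (j−u) m • ε u m` whose past spans the past of `ε`, the squared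
distance from `A_N ζ = Σ_{j=0}^N Σ_k a k j • ζ j k` to the past `S` equals
`Σ_{l=0}^N Σ_m |(A_N d)_{l,m}|²` with `(A_N d)_{l,m} = Σ_{j=l}^N Σ_k a k j d k (j−l) m`. -/
theorem moving_average_finite_extrapolation_error
    {H : Type*} [NormedAddCommGroup H] [InnerProductSpace ℂ H] [CompleteSpace H]
    (M : ℕ) (hM : 1 ≤ M) (ε : ℤ → Fin M → H)
    (hε : Orthonormal ℂ (fun q : ℤ × Fin M => ε q.1 q.2))
    (d : ℕ → ℕ → Fin M → ℂ)
    (hd : Summable (fun t : ℕ × ℕ × Fin M => ‖d t.1 t.2.1 t.2.2‖ ^ 2))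
    (ζ : ℤ → ℕ → H)
    (hζ : ∀ (j : ℤ) (k : ℕ),
      HasSum (fun q : {u : ℤ // u ≤ j} × Fin M =>
        d k ((j - (q.1 : ℤ)).toNat) q.2 • ε (q.1 : ℤ) q.2) (ζ j k))
    (N : ℕ) (a : ℕ → ℕ → ℂ)
    (ha : ∀ j ≤ N, Summable (fun k => ‖a k j‖ ^ 2))
    (S : Submodule ℂ H)
    (hS : S = (Submodule.span ℂ
      (Set.range fun q : {u : ℤ // u ≤ -1} × Fin M => ε (q.1 : ℤ) q.2)).topologicalClosure)
    (hcanon : (Submodule.span ℂ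
      {v : H | ∃ (j : ℤ) (k : ℕ), j ≤ -1 ∧ ζ j k = v}).topologicalClosure = S) :
    (Metric.infDist
        (∑ j ∈ Finset.range (N + 1), ∑' k : ℕ, a k j • ζ (j : ℤ) k) (S : Set H)) ^ 2
      = ∑ l ∈ Finset.range (N + 1), ∑ m : Fin M,
          ‖∑ j ∈ Finset.Icc l N, ∑' k : ℕ, a k j * d k (j - l) m‖ ^ 2 := by
  classical
  clear hcanon hM
  -- basic facts about S
  have hScl : IsClosed (S : Set H) := by
    rw [hS]; exact Submodule.isClosed_topologicalClosure _
  have hεS : ∀ (u : ℤ), u ≤ -1 → ∀ m : Fin M, ε u m ∈ S := by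
    intro u hu m
    rw [hS]
    exact Submodule.le_topologicalClosure _ (Submodule.subset_span ⟨(⟨u, hu⟩, m), rfl⟩)
  -- summability of slices of d
  have hdnn : 0 ≤ fun t : ℕ × ℕ × Fin M => ‖d t.1 t.2.1 t.2.2‖ ^ 2 := fun t => sq_nonneg _
  obtain ⟨hDk, hD⟩ := (summable_prod_of_nonneg hdnn).mp hd
  set D : ℕ → ℝ := fun k => ∑' pm : ℕ × Fin M, ‖d k pm.1 pm.2‖ ^ 2 with hD_def
  have hdkm : ∀ (p : ℕ) (m : Fin M), Summable (fun k => ‖d k p m‖ ^ 2) := by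
    intro p m
    exact hd.comp_injective (i := fun k => (k, p, m)) (by intro k k' h; simpa using h)
  -- the squared norm of ζ j k
  have hnorm : ∀ (j : ℤ) (k : ℕ),
      HasSum (fun pm : ℕ × Fin M => ‖d k pm.1 pm.2‖ ^ 2) (‖ζ j k‖ ^ 2) := by
    intro j k
    have hinj : Function.Injective
        (fun q : {u : ℤ // u ≤ j} × Fin M => (((q.1 : ℤ), q.2) : ℤ × Fin M)) := by
      rintro ⟨⟨u, hu⟩, m⟩ ⟨⟨u', hu'⟩, m'⟩ hqq
      simp only [Prod.mk.injEq, Subtype.mk.injEq] at hqq ⊢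
      exact ⟨hqq.1, hqq.2⟩
    have horth := hε.comp _ hinj
    have h0 := aux_hasSum_normSq horth (hζ j k)
    let ψ : ℕ × Fin M ≃ {u : ℤ // u ≤ j} × Fin M :=
      { toFun := fun pm => (⟨j - (pm.1 : ℤ), by omega⟩, pm.2)
        invFun := fun q => ((j - ((q.1 : ℤ))).toNat, q.2)
        left_inv := by
          rintro ⟨p, m⟩
          simp only [Prod.mk.injEq, and_true]
          omega
        right_inv := by
          rintro ⟨⟨u, hu⟩, m⟩
          simp only [Prod.mk.injEq, Subtype.mk.injEq, and_true]
          omega }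
    have h1 := (Equiv.hasSum_iff ψ).mpr h0
    have h2 : ((fun q : {u : ℤ // u ≤ j} × Fin M =>
        ‖d k ((j - ((q.1 : ℤ))).toNat) q.2‖ ^ 2) ∘ ψ) = fun pm => ‖d k pm.1 pm.2‖ ^ 2 := by
      funext pm
      have h3 : (j - (j - (pm.1 : ℤ))).toNat = pm.1 := by omega
      simp only [Function.comp_apply, ψ, Equiv.coe_fn_mk, h3]
    rwa [h2] at h1
  have hζnorm : ∀ (j : ℤ) (k : ℕ), ‖ζ j k‖ ^ 2 = D k :=
    fun j k => ((hnorm j k).tsum_eq).symm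
  -- summability facts
  have hsum_ad : ∀ (j p : ℕ) (m : Fin M), j ≤ N → Summable (fun k => a k j * d k p m) := by
    intro j p m hj
    have hb : Summable (fun k => (‖a k j‖ ^ 2 + ‖d k p m‖ ^ 2) / 2) :=
      ((ha j hj).add (hdkm p m)).div_const 2
    apply Summable.of_norm
    apply Summable.of_nonneg_of_le (fun k => norm_nonneg _) _ hb
    intro k
    rw [norm_mul]
    nlinarith [sq_nonneg (‖a k j‖ - ‖d k p m‖), norm_nonneg (a k j), norm_nonneg (d k p m)]
  have hsum_aζ : ∀ j : ℕ, j ≤ N → Summable (fun k => a k j • ζ (j : ℤ) k) := by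
    intro j hj
    have hb : Summable (fun k => (‖a k j‖ ^ 2 + D k) / 2) := ((ha j hj).add hD).div_const 2
    apply Summable.of_norm
    apply Summable.of_nonneg_of_le (fun k => norm_nonneg _) _ hb
    intro k
    rw [norm_smul]
    have h1 : ‖ζ (j : ℤ) k‖ ^ 2 = D k := hζnorm _ k
    nlinarith [sq_nonneg (‖a k j‖ - ‖ζ (j : ℤ) k‖), norm_nonneg (a k j),
      norm_nonneg (ζ (j : ℤ) k)]
  -- the "past" part of ζ j k
  set Q : ℕ → ℕ → H := fun j k => ∑' q : {u : ℤ // u ≤ -1} × Fin M,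
    d k (((j : ℤ) - (q.1 : ℤ)).toNat) q.2 • ε (q.1 : ℤ) q.2 with hQ_def
  have hQsum : ∀ (j k : ℕ), Summable (fun q : {u : ℤ // u ≤ -1} × Fin M =>
      d k (((j : ℤ) - (q.1 : ℤ)).toNat) q.2 • ε (q.1 : ℤ) q.2) := by
    intro j k
    have hinj : Function.Injective
        (fun q : {u : ℤ // u ≤ -1} × Fin M =>
          (((⟨q.1, by have := q.1.2; omega⟩ : {u : ℤ // u ≤ (j : ℤ)}), q.2)
            : {u : ℤ // u ≤ (j : ℤ)} × Fin M)) := by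
      rintro ⟨⟨u, hu⟩, m⟩ ⟨⟨u', hu'⟩, m'⟩ hqq
      simp only [Prod.mk.injEq, Subtype.mk.injEq] at hqq ⊢
      exact ⟨hqq.1, hqq.2⟩
    have h2 := (hζ (j : ℤ) k).summable.comp_injective hinj
    exact h2
  have hQmem : ∀ j k, Q j k ∈ S := by
    intro j k
    apply aux_tsum_mem_of_closed S hScl (hQsum j k)
    rintro ⟨⟨u, hu⟩, m⟩
    exact S.smul_mem _ (hεS u hu m)
  -- splitting of ζ j k
  have hsplit : ∀ (j k : ℕ), ζ (j : ℤ) k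
      = Q j k + ∑ l ∈ Finset.range (j + 1), ∑ m : Fin M, d k (j - l) m • ε (l : ℤ) m := by
    intro j k
    set f : {u : ℤ // u ≤ (j : ℤ)} × Fin M → H :=
      fun q => d k (((j : ℤ) - (q.1 : ℤ)).toNat) q.2 • ε (q.1 : ℤ) q.2 with hf_def
    set s : Set ({u : ℤ // u ≤ (j : ℤ)} × Fin M) := {q | (q.1 : ℤ) ≤ -1} with hs_def
    let φ : {u : ℤ // u ≤ -1} × Fin M ≃ s :=
      { toFun := fun q => ⟨((⟨q.1, by have := q.1.2; omega⟩ : {u : ℤ // u ≤ (j : ℤ)}), q.2),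
          q.1.2⟩
        invFun := fun q => ((⟨((q.1).1 : ℤ), q.2⟩ : {u : ℤ // u ≤ -1}), (q.1).2)
        left_inv := by rintro ⟨⟨u, hu⟩, m⟩; rfl
        right_inv := by rintro ⟨⟨⟨u, hu⟩, m⟩, hq⟩; rfl }
    have hQhs : HasSum (f ∘ (↑) : s → H) (Q j k) :=
      (Equiv.hasSum_iff φ).mp (hQsum j k).hasSum
    let χ : Fin (j + 1) × Fin M ≃ (sᶜ : Set _) :=
      { toFun := fun q => ⟨((⟨((q.1 : ℕ) : ℤ), by have := q.1.isLt; omega⟩ :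
            {u : ℤ // u ≤ (j : ℤ)}), q.2), by
          simp only [hs_def, Set.mem_compl_iff, Set.mem_setOf_eq, not_le]
          have := q.1.isLt; omega⟩
        invFun := fun q => ((⟨(((q.1).1 : ℤ)).toNat, by
            have h1 := (q.1).1.2
            have h2 := q.2
            simp only [hs_def, Set.mem_compl_iff, Set.mem_setOf_eq, not_le] at h2
            omega⟩ : Fin (j + 1)), (q.1).2)
        left_inv := by
          rintro ⟨i, m⟩
          simp only [Prod.mk.injEq, Fin.ext_iff, and_true]
          omega
        right_inv := by
          rintro ⟨⟨⟨u, hu⟩, m⟩, hq⟩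
          simp only [hs_def, Set.mem_compl_iff, Set.mem_setOf_eq, not_le] at hq
          simp only [Subtype.mk.injEq, Prod.mk.injEq, and_true]
          omega }
    have hPc : HasSum (f ∘ (↑) : (sᶜ : Set _) → H) (∑ q : Fin (j + 1) × Fin M, f (χ q)) :=
      (Equiv.hasSum_iff χ).mp (hasSum_fintype _)
    have htot : HasSum f (Q j k + ∑ q : Fin (j + 1) × Fin M, f (χ q)) :=
      hQhs.add_compl hPc
    have heq : Q j k + ∑ q : Fin (j + 1) × Fin M, f (χ q) = ζ (j : ℤ) k :=
      htot.unique (hζ (j : ℤ) k)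
    rw [← heq]
    congr 1
    rw [Fintype.sum_prod_type]
    rw [← Fin.sum_univ_eq_sum_range
      (fun l => ∑ m : Fin M, d k (j - l) m • ε (l : ℤ) m) (j + 1)]
    apply Finset.sum_congr rfl
    intro i _
    apply Finset.sum_congr rfl
    intro m _
    have hlt := i.isLt
    have h1 : (((j : ℤ) - ((i : ℕ) : ℤ)).toNat) = j - (i : ℕ) := by omega
    simp only [f, χ, Equiv.coe_fn_mk, h1]
  -- summability of the pieces multiplied by a
  have hsum_aP : ∀ j : ℕ, j ≤ N → Summable (fun k => ∑ l ∈ Finset.range (j + 1),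
      ∑ m : Fin M, (a k j * d k (j - l) m) • ε (l : ℤ) m) := by
    intro j hj
    apply summable_sum
    intro l _
    apply summable_sum
    intro m _
    exact (hsum_ad j (j - l) m hj).smul_const _
  have hsum_aQ : ∀ j : ℕ, j ≤ N → Summable (fun k => a k j • Q j k) := by
    intro j hj
    have h1 : (fun k => a k j • Q j k)
        = fun k => a k j • ζ (j : ℤ) k - ∑ l ∈ Finset.range (j + 1), ∑ m : Fin M,
            (a k j * d k (j - l) m) • ε (l : ℤ) m := by
      funext k
      rw [hsplit j k, smul_add]
      simp only [Finset.smul_sum, smul_smul]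
      abel
    rw [h1]
    exact (hsum_aζ j hj).sub (hsum_aP j hj)
  -- the per-j decomposition of the tsum
  have hstep : ∀ j : ℕ, j ≤ N → (∑' k, a k j • ζ (j : ℤ) k)
      = (∑' k, a k j • Q j k) + ∑ l ∈ Finset.range (j + 1), ∑ m : Fin M,
          (∑' k, a k j * d k (j - l) m) • ε (l : ℤ) m := by
    intro j hj
    have h1 : ∀ k, a k j • ζ (j : ℤ) k = a k j • Q j k
        + ∑ l ∈ Finset.range (j + 1), ∑ m : Fin M,
            (a k j * d k (j - l) m) • ε (l : ℤ) m := by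
      intro k
      rw [hsplit j k, smul_add]
      simp only [Finset.smul_sum, smul_smul]
    rw [tsum_congr h1, Summable.tsum_add (hsum_aQ j hj) (hsum_aP j hj)]
    congr 1
    rw [Summable.tsum_finsetSum (fun l _ => summable_sum (fun m _ => (hsum_ad j (j - l) m hj).smul_const _))]
    apply Finset.sum_congr rfl
    intro l _
    rw [Summable.tsum_finsetSum (fun m _ => (hsum_ad j (j - l) m hj).smul_const _)]
    apply Finset.sum_congr rfl
    intro m _
    exact Summable.tsum_smul_const (hsum_ad j (j - l) m hj) _
  -- assemble
  set c : ℕ → Fin M → ℂ :=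
    fun l m => ∑ j ∈ Finset.Icc l N, ∑' k, a k j * d k (j - l) m with hc_def
  set xp : H := ∑ l ∈ Finset.range (N + 1), ∑ m : Fin M, c l m • ε (l : ℤ) m with hxp_def
  set s₀ : H := ∑ j ∈ Finset.range (N + 1), ∑' k, a k j • Q j k with hs0_def
  have hs₀S : s₀ ∈ S := by
    apply S.sum_mem
    intro j hj
    have hjN : j ≤ N := by simp only [Finset.mem_range] at hj; omega
    exact aux_tsum_mem_of_closed S hScl (hsum_aQ j hjN)
      (fun k => S.smul_mem _ (hQmem j k))
  have hx : (∑ j ∈ Finset.range (N + 1), ∑' k, a k j • ζ (j : ℤ) k) = s₀ + xp := by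
    have h1 : ∀ j ∈ Finset.range (N + 1), (∑' k, a k j • ζ (j : ℤ) k)
        = (∑' k, a k j • Q j k) + ∑ l ∈ Finset.range (j + 1), ∑ m : Fin M,
            (∑' k, a k j * d k (j - l) m) • ε (l : ℤ) m := by
      intro j hj
      exact hstep j (by simp only [Finset.mem_range] at hj; omega)
    rw [Finset.sum_congr rfl h1, Finset.sum_add_distrib]
    congr 1
    rw [Finset.sum_comm' (s := Finset.range (N + 1)) (t := fun j => Finset.range (j + 1))
      (t' := Finset.range (N + 1)) (s' := fun l => Finset.Icc l N)
      (by intro j l; simp only [Finset.mem_range, Finset.mem_Icc]; omega)]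
    apply Finset.sum_congr rfl
    intro l _
    rw [Finset.sum_comm]
    apply Finset.sum_congr rfl
    intro m _
    rw [← Finset.sum_smul]
  -- orthogonality of xp to S
  have horth : ∀ y ∈ S, (inner ℂ xp y : ℂ) = 0 := by
    intro y hy
    have hK : S ≤ LinearMap.ker ((innerSL ℂ xp : H →L[ℂ] ℂ) : H →ₗ[ℂ] ℂ) := by
      rw [hS]
      apply Submodule.topologicalClosure_minimal
      · rw [Submodule.span_le]
        rintro _ ⟨⟨⟨u, hu⟩, m⟩, rfl⟩
        simp only [SetLike.mem_coe, LinearMap.mem_ker]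
        show (inner ℂ xp (ε u m) : ℂ) = 0
        rw [hxp_def, sum_inner]
        apply Finset.sum_eq_zero
        intro l _
        rw [sum_inner]
        apply Finset.sum_eq_zero
        intro m' _
        rw [inner_smul_left]
        have hne : (((l : ℤ), m') : ℤ × Fin M) ≠ (u, m) := by
          intro hX
          have h1 := congrArg Prod.fst hX
          simp only at h1
          omega
        have h0 : (inner ℂ (ε (l : ℤ) m') (ε u m) : ℂ) = 0 := hε.2 hne
        rw [h0, mul_zero]
      · exact ContinuousLinearMap.isClosed_ker _
    have h2 := hK hy
    rw [LinearMap.mem_ker] at h2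
    simpa using h2
  -- distance computation
  rw [hx]
  have hlow : ∀ y ∈ (S : Set H), ‖xp‖ ≤ dist (s₀ + xp) y := by
    intro y hy
    have hw : s₀ - y ∈ S := S.sub_mem hs₀S hy
    have heq : dist (s₀ + xp) y = ‖xp + (s₀ - y)‖ := by
      rw [dist_eq_norm]; congr 1; abel
    rw [heq]
    have h0 : RCLike.re (inner ℂ xp (s₀ - y) : ℂ) = 0 := by rw [horth _ hw]; simp
    have hns := @norm_add_sq ℂ _ _ _ _ xp (s₀ - y)
    rw [h0] at hns
    nlinarith [norm_nonneg (xp + (s₀ - y)), norm_nonneg xp, sq_nonneg (‖s₀ - y‖)]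
  have hub : Metric.infDist (s₀ + xp) (S : Set H) ≤ ‖xp‖ := by
    have h1 := Metric.infDist_le_dist_of_mem (x := s₀ + xp)
      (show s₀ ∈ (S : Set H) from hs₀S)
    simpa [dist_eq_norm, add_sub_cancel_left] using h1
  have hlb : ‖xp‖ ≤ Metric.infDist (s₀ + xp) (S : Set H) := by
    by_contra hcon
    push_neg at hcon
    obtain ⟨y, hy, hdy⟩ := (Metric.infDist_lt_iff ⟨0, S.zero_mem⟩).mp hcon
    exact absurd hdy (not_lt.mpr (hlow y hy))
  rw [le_antisymm hub hlb]
  -- squared norm of xp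
  have hεN : Orthonormal ℂ (fun lm : ℕ × Fin M => ε ((lm.1 : ℕ) : ℤ) lm.2) := by
    apply hε.comp (fun lm : ℕ × Fin M => (((lm.1 : ℕ) : ℤ), lm.2))
    rintro ⟨l, m⟩ ⟨l', m'⟩ hll
    simp only [Prod.mk.injEq, Int.natCast_inj] at hll
    simp [hll.1, hll.2]
  have hxp2 : xp = ∑ q ∈ Finset.range (N + 1) ×ˢ (Finset.univ : Finset (Fin M)),
      c q.1 q.2 • ε ((q.1 : ℕ) : ℤ) q.2 := by
    rw [Finset.sum_product]
  have hinner := hεN.inner_sum (fun q => c q.1 q.2) (fun q => c q.1 q.2)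
    (Finset.range (N + 1) ×ˢ (Finset.univ : Finset (Fin M)))
  have hnormxp : ‖xp‖ ^ 2 = ∑ l ∈ Finset.range (N + 1), ∑ m : Fin M, ‖c l m‖ ^ 2 := by
    have h1 : (‖xp‖ ^ 2 : ℝ) = RCLike.re (inner ℂ xp xp : ℂ) :=
      (inner_self_eq_norm_sq xp).symm
    rw [h1, hxp2, hinner, map_sum, Finset.sum_product]
    apply Finset.sum_congr rfl
    intro l _
    apply Finset.sum_congr rfl
    intro m _
    rw [RCLike.conj_mul]
    norm_cast
  exact hnormxp
end

section
/- Let a_{kj} ∈ ℂ (k ∈ ℕ, j ∈ ℕ) satisfy Σ_j (Σ_k |a_{kj}|²)^{1/2} < ∞ and Σ_j (j+1) Σ_k |a_{kj}|² < ∞, and let M ≥ 1 and d : ℕ → ℕ → Fin M → ℂ, written d_{km}(p), satisfy Σ_{p,k,m} |d_{km}(p)|² < ∞. Then, with (Ad)_{l,m} := Σ_{j ≥ l} Σ_k a_{kj} d_{km}(j − l) (absolutely convergent) and Q_{(k,p),(n,q)} := Σ_{s ≥ 0} a_{k,s+p} conj(a_{n,s+q}), the following identity holds, all series being absolutely convergent: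 Σ_{l ≥ 0} Σ_m |(Ad)_{l,m}|² = Σ_m Σ_{p,q ≥ 0} Σ_{k,n} Q_{(k,p),(n,q)} · d_{km}(p) · conj(d_{nm}(q)). In other words, ‖Ad‖² = Σ_m ⟨Q d_m, d_m⟩ where d_m := (d_{km}(p))_{(k,p)} ∈ ℓ²(ℕ × ℕ; ℂ). -/
namespace NormAdAux

/-- Cauchy–Schwarz inequality for `tsum` of nonnegative reals. -/
lemma cs_tsum {f g : ℕ → ℝ} (hf0 : ∀ k, 0 ≤ f k) (hg0 : ∀ k, 0 ≤ g k)
    (hf : Summable fun k => f k ^ 2) (hg : Summable fun k => g k ^ 2) :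
    Summable (fun k => f k * g k) ∧
      ∑' k, f k * g k ≤ Real.sqrt (∑' k, f k ^ 2) * Real.sqrt (∑' k, g k ^ 2) := by
  have hsum : Summable fun k => f k * g k := by
    refine Summable.of_nonneg_of_le (fun k => mul_nonneg (hf0 k) (hg0 k))
      (fun k => ?_) ((hf.add hg).div_const 2)
    have h := two_mul_le_add_sq (f k) (g k)
    nlinarith
  refine ⟨hsum, Summable.tsum_le_of_sum_le hsum fun s => ?_⟩
  have h1 : (∑ k ∈ s, f k * g k) ^ 2 ≤ (∑ k ∈ s, f k ^ 2) * ∑ k ∈ s, g k ^ 2 :=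
    Finset.sum_mul_sq_le_sq_mul_sq s f g
  have h2 : ∑ k ∈ s, f k ^ 2 ≤ ∑' k, f k ^ 2 := Summable.sum_le_tsum s (fun i _ => sq_nonneg _) hf
  have h3 : ∑ k ∈ s, g k ^ 2 ≤ ∑' k, g k ^ 2 := Summable.sum_le_tsum s (fun i _ => sq_nonneg _) hg
  have hs0 : 0 ≤ ∑ k ∈ s, f k * g k :=
    Finset.sum_nonneg fun k _ => mul_nonneg (hf0 k) (hg0 k)
  have hF0 : 0 ≤ ∑' k, f k ^ 2 := tsum_nonneg fun k => sq_nonneg _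
  have hG0 : 0 ≤ ∑' k, g k ^ 2 := tsum_nonneg fun k => sq_nonneg _
  have key : ∑ k ∈ s, f k * g k ≤ Real.sqrt ((∑' k, f k ^ 2) * ∑' k, g k ^ 2) := by
    rw [Real.le_sqrt hs0 (mul_nonneg hF0 hG0)]
    calc (∑ k ∈ s, f k * g k) ^ 2 ≤ (∑ k ∈ s, f k ^ 2) * ∑ k ∈ s, g k ^ 2 := h1
      _ ≤ _ := mul_le_mul h2 h3 (Finset.sum_nonneg fun k _ => sq_nonneg _) hF0
  rwa [Real.sqrt_mul hF0] at key

/-- Weighted Cauchy–Schwarz: `(Σ u v)² ≤ (Σ u) (Σ u v²)` for nonnegative `u, v`. -/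
lemma weighted_cs {u v : ℕ → ℝ} (hu0 : ∀ p, 0 ≤ u p) (hv0 : ∀ p, 0 ≤ v p)
    (hu : Summable u) (huv2 : Summable fun p => u p * v p ^ 2) :
    Summable (fun p => u p * v p) ∧
      (∑' p, u p * v p) ^ 2 ≤ (∑' p, u p) * ∑' p, u p * v p ^ 2 := by
  have hf : Summable fun p => Real.sqrt (u p) ^ 2 :=
    hu.congr fun p => (Real.sq_sqrt (hu0 p)).symm
  have hg : Summable fun p => (Real.sqrt (u p) * v p) ^ 2 :=
    huv2.congr fun p => by rw [mul_pow, Real.sq_sqrt (hu0 p)]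
  obtain ⟨hs, hle⟩ := cs_tsum (fun p => Real.sqrt_nonneg _)
    (fun p => mul_nonneg (Real.sqrt_nonneg _) (hv0 p)) hf hg
  have hfg : ∀ p, Real.sqrt (u p) * (Real.sqrt (u p) * v p) = u p * v p := fun p => by
    rw [← mul_assoc, Real.mul_self_sqrt (hu0 p)]
  have hs' : Summable fun p => u p * v p := hs.congr hfg
  refine ⟨hs', ?_⟩
  have h1 : ∑' p, u p * v p
      ≤ Real.sqrt (∑' p, Real.sqrt (u p) ^ 2) * Real.sqrt (∑' p, (Real.sqrt (u p) * v p) ^ 2) := by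
    rw [← tsum_congr hfg]
    exact hle
  have h2 : (∑' p, Real.sqrt (u p) ^ 2) = ∑' p, u p :=
    tsum_congr fun p => Real.sq_sqrt (hu0 p)
  have h3 : (∑' p, (Real.sqrt (u p) * v p) ^ 2) = ∑' p, u p * v p ^ 2 :=
    tsum_congr fun p => by rw [mul_pow, Real.sq_sqrt (hu0 p)]
  rw [h2, h3] at h1
  have h4 : (∑' p, u p * v p) ^ 2
      ≤ (Real.sqrt (∑' p, u p) * Real.sqrt (∑' p, u p * v p ^ 2)) ^ 2 :=
    pow_le_pow_left₀ (tsum_nonneg fun p => mul_nonneg (hu0 p) (hv0 p)) h1 2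
  rwa [mul_pow, Real.sq_sqrt (tsum_nonneg fun p => hu0 p),
    Real.sq_sqrt (tsum_nonneg fun p => mul_nonneg (hu0 p) (sq_nonneg _))] at h4

/-- The reindexing `(k, p) ↦ (l + p, k)`. -/
def shiftEquiv (l : ℕ) : ℕ × ℕ ≃ {j : ℕ // l ≤ j} × ℕ where
  toFun z := (⟨l + z.2, Nat.le_add_right _ _⟩, z.1)
  invFun w := (w.2, (w.1 : ℕ) - l)
  left_inv z := by cases z; simp
  right_inv w := by
    obtain ⟨⟨j, hj⟩, k⟩ := w
    have h : l + (j - l) = j := by omega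
    simp [h]

noncomputable def cf {M : ℕ} (a : ℕ → ℕ → ℂ) (d : ℕ → ℕ → Fin M → ℂ)
    (m : Fin M) (l : ℕ) (z : ℕ × ℕ) : ℂ :=
  a z.1 (l + z.2) * d z.1 z.2 m

noncomputable def Qd {M : ℕ} (a : ℕ → ℕ → ℂ) (d : ℕ → ℕ → Fin M → ℂ)
    (m : Fin M) (t : (ℕ × ℕ) × (ℕ × ℕ)) : ℂ :=
  (∑' s : ℕ, a t.1.1 (s + t.1.2) * (starRingEnd ℂ) (a t.2.1 (s + t.2.2)))
    * d t.1.1 t.1.2 m * (starRingEnd ℂ) (d t.2.1 t.2.2 m)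

end NormAdAux

set_option maxHeartbeats 2000000 in
open NormAdAux in
/-- With `(Ad)_{l,m} = Σ_{j ≥ l} Σ_k a_{kj} d_{km}(j−l)` and
`Q_{(k,p),(n,q)} = Σ_s a_{k,s+p} conj(a_{n,s+q})`, all the series below converge absolutely
and `Σ_{l,m} |(Ad)_{l,m}|² = Σ_m Σ_{(k,p),(n,q)} Q_{(k,p),(n,q)} d_{km}(p) conj(d_{nm}(q))`.
(Here `d k p m` represents `d_{km}(p)`, and pairs are `(k, p)`.) -/
theorem norm_Ad_sq_eq_quadratic_form
    (M : ℕ) (hM : 1 ≤ M)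
    (a : ℕ → ℕ → ℂ)
    (ha1 : ∀ j : ℕ, Summable (fun k => ‖a k j‖ ^ 2))
    (ha2 : Summable (fun j : ℕ => Real.sqrt (∑' k : ℕ, ‖a k j‖ ^ 2)))
    (ha3 : Summable (fun j : ℕ => ((j : ℝ) + 1) * ∑' k : ℕ, ‖a k j‖ ^ 2))
    (d : ℕ → ℕ → Fin M → ℂ)
    (hd : Summable (fun t : ℕ × ℕ × Fin M => ‖d t.1 t.2.1 t.2.2‖ ^ 2)) :
    (∀ (l : ℕ) (m : Fin M),
        Summable (fun p : {j : ℕ // l ≤ j} × ℕ =>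
          ‖a p.2 (p.1 : ℕ) * d p.2 ((p.1 : ℕ) - l) m‖)) ∧
      Summable (fun w : ℕ × Fin M =>
        ‖∑' p : {j : ℕ // w.1 ≤ j} × ℕ,
            a p.2 (p.1 : ℕ) * d p.2 ((p.1 : ℕ) - w.1) w.2‖ ^ 2) ∧
      (∀ m : Fin M,
        Summable (fun t : (ℕ × ℕ) × (ℕ × ℕ) =>
          ‖(∑' s : ℕ, a t.1.1 (s + t.1.2) * (starRingEnd ℂ) (a t.2.1 (s + t.2.2)))
              * d t.1.1 t.1.2 m * (starRingEnd ℂ) (d t.2.1 t.2.2 m)‖)) ∧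
      ((∑' w : ℕ × Fin M,
          ‖∑' p : {j : ℕ // w.1 ≤ j} × ℕ,
              a p.2 (p.1 : ℕ) * d p.2 ((p.1 : ℕ) - w.1) w.2‖ ^ 2 : ℝ) : ℂ)
        = ∑' m : Fin M, ∑' t : (ℕ × ℕ) × (ℕ × ℕ),
            (∑' s : ℕ, a t.1.1 (s + t.1.2) * (starRingEnd ℂ) (a t.2.1 (s + t.2.2)))
              * d t.1.1 t.1.2 m * (starRingEnd ℂ) (d t.2.1 t.2.2 m) := by
  classical
  -- column norms of `a` and `d`
  set b : ℕ → ℝ := fun j => Real.sqrt (∑' k : ℕ, ‖a k j‖ ^ 2) with hb_def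
  set e : ℕ → Fin M → ℝ := fun p m => Real.sqrt (∑' k : ℕ, ‖d k p m‖ ^ 2) with he_def
  have hb0 : ∀ j, 0 ≤ b j := fun j => Real.sqrt_nonneg _
  have he0 : ∀ p m, 0 ≤ e p m := fun p m => Real.sqrt_nonneg _
  have hbsum : Summable b := ha2
  have hdpm : ∀ (p : ℕ) (m : Fin M), Summable fun k => ‖d k p m‖ ^ 2 := by
    intro p m
    exact hd.comp_injective (i := fun k => (k, p, m)) fun x y h => congrArg Prod.fst h
  set Etot : ℝ := Real.sqrt (∑' t : ℕ × ℕ × Fin M, ‖d t.1 t.2.1 t.2.2‖ ^ 2) with hE_def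
  have heE : ∀ p m, e p m ≤ Etot := by
    intro p m
    refine Real.sqrt_le_sqrt ?_
    refine Summable.tsum_le_tsum_of_inj (fun k => (k, p, m))
      (fun x y h => congrArg Prod.fst h) (fun c _ => by positivity)
      (fun k => le_rfl) (hdpm p m) hd
  have hesm : ∀ m : Fin M, Summable fun p => e p m ^ 2 := by
    intro m
    have hprod : Summable fun z : ℕ × ℕ => ‖d z.2 z.1 m‖ ^ 2 := by
      refine hd.comp_injective (i := fun z : ℕ × ℕ => (z.2, z.1, m)) ?_
      intro x y h
      have h1 := congrArg Prod.fst h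
      have h2 := congrArg (fun t : ℕ × ℕ × Fin M => t.2.1) h
      exact Prod.ext h2 h1
    have := ((summable_prod_of_nonneg (f := fun z : ℕ × ℕ => ‖d z.2 z.1 m‖ ^ 2)
      (fun z => by positivity)).mp hprod).2
    refine this.congr fun p => ?_
    rw [he_def]
    exact (Real.sq_sqrt (tsum_nonneg fun k => sq_nonneg _)).symm
  have hbshift : ∀ l, Summable fun p => b (l + p) :=
    fun l => hbsum.comp_injective (add_right_injective l)
  set B : ℝ := ∑' j, b j with hB_def
  have hB2 : ∀ l, (∑' p, b (l + p)) ≤ B := by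
    intro l
    refine Summable.tsum_le_tsum_of_inj (fun p => l + p) (add_right_injective l)
      (fun c _ => hb0 c) (fun p => le_rfl) (hbshift l) hbsum
  have hB1 : ∀ p, (∑' l, b (l + p)) ≤ B := by
    intro p
    refine Summable.tsum_le_tsum_of_inj (fun l => l + p) (add_left_injective p)
      (fun c _ => hb0 c) (fun l => le_rfl) (hbsum.comp_injective (add_left_injective p)) hbsum
  -- per (l, p) Cauchy–Schwarz over k
  have hfib : ∀ (m : Fin M) (l p : ℕ),
      Summable (fun k => ‖a k (l + p)‖ * ‖d k p m‖) ∧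
        ∑' k, ‖a k (l + p)‖ * ‖d k p m‖ ≤ b (l + p) * e p m := by
    intro m l p
    exact cs_tsum (fun k => norm_nonneg _) (fun k => norm_nonneg _) (ha1 (l + p)) (hdpm p m)
  have hSp_sum : ∀ (m : Fin M) (l : ℕ), Summable fun p => b (l + p) * e p m := by
    intro m l
    refine Summable.of_nonneg_of_le (fun p => mul_nonneg (hb0 _) (he0 _ _))
      (fun p => ?_) ((hbshift l).mul_right Etot)
    exact mul_le_mul_of_nonneg_left (heE p m) (hb0 _)
  -- summability of the double norm family, indexed by (p, k)
  have hsum_pk : ∀ (m : Fin M) (l : ℕ),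
      Summable fun z : ℕ × ℕ => ‖a z.2 (l + z.1)‖ * ‖d z.2 z.1 m‖ := by
    intro m l
    rw [summable_prod_of_nonneg (fun z => mul_nonneg (norm_nonneg _) (norm_nonneg _))]
    constructor
    · intro p; exact (hfib m l p).1
    · refine Summable.of_nonneg_of_le
        (fun p => tsum_nonneg fun k => mul_nonneg (norm_nonneg _) (norm_nonneg _))
        (fun p => (hfib m l p).2) (hSp_sum m l)
  have hS_le : ∀ (m : Fin M) (l : ℕ),
      (∑' z : ℕ × ℕ, ‖a z.2 (l + z.1)‖ * ‖d z.2 z.1 m‖) ≤ ∑' p, b (l + p) * e p m := by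
    intro m l
    rw [Summable.tsum_prod (hsum_pk m l)]
    exact Summable.tsum_le_tsum (fun p => (hfib m l p).2)
      ((summable_prod_of_nonneg (fun z => mul_nonneg (norm_nonneg _) (norm_nonneg _))).mp
        (hsum_pk m l)).2 (hSp_sum m l)
  -- Summable of (l, p) ↦ b (l+p) * e p m ^ 2
  have hbe2 : ∀ (m : Fin M) (l : ℕ), Summable fun p => b (l + p) * e p m ^ 2 := by
    intro m l
    refine Summable.of_nonneg_of_le (fun p => mul_nonneg (hb0 _) (sq_nonneg _))
      (fun p => ?_) ((hbshift l).mul_right (Etot ^ 2))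
    exact mul_le_mul_of_nonneg_left
      (pow_le_pow_left₀ (he0 p m) (heE p m) 2) (hb0 _)
  have hW : ∀ m : Fin M, Summable fun l => ∑' p, b (l + p) * e p m ^ 2 := by
    intro m
    have hWswap : Summable fun z : ℕ × ℕ => b (z.2 + z.1) * e z.1 m ^ 2 := by
      rw [summable_prod_of_nonneg (fun z => mul_nonneg (hb0 _) (sq_nonneg _))]
      constructor
      · intro p
        exact (hbsum.comp_injective (add_left_injective p)).mul_right (e p m ^ 2)
      · refine Summable.of_nonneg_of_le
          (fun p => tsum_nonneg fun l => mul_nonneg (hb0 _) (sq_nonneg _))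
          (fun p => ?_) ((hesm m).mul_left B)
        have step1 : (∑' l : ℕ, (fun z : ℕ × ℕ => b (z.2 + z.1) * e z.1 m ^ 2) (p, l))
            = ∑' l : ℕ, b (l + p) * e p m ^ 2 := tsum_congr fun l => rfl
        rw [step1, tsum_mul_right]
        exact mul_le_mul_of_nonneg_right (hB1 p) (sq_nonneg _)
    exact ((summable_prod_of_nonneg (f := fun q : ℕ × ℕ => b (q.1 + q.2) * e q.2 m ^ 2)
      (fun q => mul_nonneg (hb0 _) (sq_nonneg _))).mp hWswap.prod_symm).2
  -- Summable of l ↦ S l ^ 2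
  have hSsq : ∀ m : Fin M,
      Summable fun l => (∑' z : ℕ × ℕ, ‖a z.2 (l + z.1)‖ * ‖d z.2 z.1 m‖) ^ 2 := by
    intro m
    refine Summable.of_nonneg_of_le (fun l => sq_nonneg _) (fun l => ?_)
      ((hW m).mul_left B)
    have hcs := (weighted_cs (u := fun p => b (l + p)) (v := fun p => e p m)
      (fun p => hb0 _) (fun p => he0 _ _) (hbshift l) (hbe2 m l)).2
    calc (∑' z : ℕ × ℕ, ‖a z.2 (l + z.1)‖ * ‖d z.2 z.1 m‖) ^ 2
        ≤ (∑' p, b (l + p) * e p m) ^ 2 :=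
          pow_le_pow_left₀
            (tsum_nonneg fun z => mul_nonneg (norm_nonneg _) (norm_nonneg _))
            (hS_le m l) 2
      _ ≤ (∑' p, b (l + p)) * ∑' p, b (l + p) * e p m ^ 2 := hcs
      _ ≤ B * ∑' p, b (l + p) * e p m ^ 2 :=
          mul_le_mul_of_nonneg_right (hB2 l)
            (tsum_nonneg fun p => mul_nonneg (hb0 _) (sq_nonneg _))
  -- norm-summability of cf in the (k, p) order
  have hswap : ∀ (m : Fin M) (l : ℕ), Summable fun z : ℕ × ℕ => ‖cf a d m l z‖ := by
    intro m l
    refine (hsum_pk m l).prod_symm.congr fun z => ?_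
    simp [cf, norm_mul]
  have hNS : ∀ (m : Fin M) (l : ℕ),
      (∑' z : ℕ × ℕ, ‖cf a d m l z‖) = ∑' z : ℕ × ℕ, ‖a z.2 (l + z.1)‖ * ‖d z.2 z.1 m‖ := by
    intro m l
    calc (∑' z : ℕ × ℕ, ‖cf a d m l z‖)
        = ∑' z : ℕ × ℕ, ‖cf a d m l (z.2, z.1)‖ :=
          ((Equiv.prodComm ℕ ℕ).tsum_eq fun z : ℕ × ℕ => ‖cf a d m l z‖).symm
      _ = ∑' z : ℕ × ℕ, ‖a z.2 (l + z.1)‖ * ‖d z.2 z.1 m‖ := by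
          refine tsum_congr fun z => ?_
          simp [cf, norm_mul]
  have hcsum : ∀ (m : Fin M) (l : ℕ), Summable (cf a d m l) :=
    fun m l => (hswap m l).of_norm
  -- bound on ‖A m l‖ and summability of its squares
  have hAle : ∀ (m : Fin M) (l : ℕ),
      ‖∑' z : ℕ × ℕ, cf a d m l z‖ ≤ ∑' z : ℕ × ℕ, ‖a z.2 (l + z.1)‖ * ‖d z.2 z.1 m‖ :=
    fun m l => (norm_tsum_le_tsum_norm (hswap m l)).trans_eq (hNS m l)
  have hA2sum : ∀ m : Fin M, Summable fun l => ‖∑' z : ℕ × ℕ, cf a d m l z‖ ^ 2 := by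
    intro m
    refine Summable.of_nonneg_of_le (fun l => sq_nonneg _) (fun l => ?_) (hSsq m)
    exact pow_le_pow_left₀ (norm_nonneg _) (hAle m l) 2
  -- pairwise families
  have hpair_norm : ∀ (m : Fin M) (l : ℕ),
      Summable fun t : (ℕ × ℕ) × (ℕ × ℕ) => ‖cf a d m l t.1‖ * ‖cf a d m l t.2‖ :=
    fun m l => (hswap m l).mul_of_nonneg (hswap m l)
      (fun z => norm_nonneg _) (fun z => norm_nonneg _)
  have hpair_norm' : ∀ (m : Fin M) (l : ℕ),
      Summable fun t : (ℕ × ℕ) × (ℕ × ℕ) =>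
        ‖cf a d m l t.1 * (starRingEnd ℂ) (cf a d m l t.2)‖ := by
    intro m l
    refine (hpair_norm m l).congr fun t => ?_
    rw [norm_mul, RCLike.norm_conj]
  have hpair : ∀ (m : Fin M) (l : ℕ),
      Summable fun t : (ℕ × ℕ) × (ℕ × ℕ) =>
        cf a d m l t.1 * (starRingEnd ℂ) (cf a d m l t.2) :=
    fun m l => (hpair_norm' m l).of_norm
  -- the master family and its summability
  have hGnorm : ∀ m : Fin M,
      Summable fun x : ℕ × ((ℕ × ℕ) × (ℕ × ℕ)) =>
        ‖cf a d m x.1 x.2.1 * (starRingEnd ℂ) (cf a d m x.1 x.2.2)‖ := by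
    intro m
    rw [summable_prod_of_nonneg (fun x => norm_nonneg _)]
    refine ⟨fun l => hpair_norm' m l, ?_⟩
    refine (hSsq m).congr fun l => ?_
    have hmul : (∑' t : (ℕ × ℕ) × (ℕ × ℕ), ‖cf a d m l t.1‖ * ‖cf a d m l t.2‖)
        = (∑' z : ℕ × ℕ, ‖cf a d m l z‖) * ∑' z : ℕ × ℕ, ‖cf a d m l z‖ :=
      ((hswap m l).hasSum.mul (hswap m l).hasSum (hpair_norm m l)).tsum_eq
    calc (∑' z : ℕ × ℕ, ‖a z.2 (l + z.1)‖ * ‖d z.2 z.1 m‖) ^ 2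
        = (∑' z : ℕ × ℕ, ‖cf a d m l z‖) * ∑' z : ℕ × ℕ, ‖cf a d m l z‖ := by
          rw [sq, hNS m l]
      _ = ∑' t : (ℕ × ℕ) × (ℕ × ℕ), ‖cf a d m l t.1‖ * ‖cf a d m l t.2‖ := hmul.symm
      _ = ∑' t : (ℕ × ℕ) × (ℕ × ℕ),
            ‖cf a d m l t.1 * (starRingEnd ℂ) (cf a d m l t.2)‖ := by
          refine tsum_congr fun t => ?_
          rw [norm_mul, RCLike.norm_conj]
  have hG : ∀ m : Fin M,
      Summable fun x : ℕ × ((ℕ × ℕ) × (ℕ × ℕ)) =>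
        cf a d m x.1 x.2.1 * (starRingEnd ℂ) (cf a d m x.1 x.2.2) :=
    fun m => (hGnorm m).of_norm
  -- identity B : the l-sum for a fixed pair t
  have hBident : ∀ (m : Fin M) (t : (ℕ × ℕ) × (ℕ × ℕ)),
      (∑' l : ℕ, cf a d m l t.1 * (starRingEnd ℂ) (cf a d m l t.2)) = Qd a d m t := by
    intro m t
    have h1 : ∀ l : ℕ, cf a d m l t.1 * (starRingEnd ℂ) (cf a d m l t.2)
        = (a t.1.1 (l + t.1.2) * (starRingEnd ℂ) (a t.2.1 (l + t.2.2)))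
          * (d t.1.1 t.1.2 m * (starRingEnd ℂ) (d t.2.1 t.2.2 m)) := by
      intro l
      simp only [cf, map_mul]
      ring
    rw [tsum_congr h1, tsum_mul_right, Qd]
    have h2 : (∑' l : ℕ, a t.1.1 (l + t.1.2) * (starRingEnd ℂ) (a t.2.1 (l + t.2.2)))
        = ∑' s : ℕ, a t.1.1 (s + t.1.2) * (starRingEnd ℂ) (a t.2.1 (s + t.2.2)) := rfl
    rw [h2]
    ring
  -- part 3 : absolute convergence of the Q-form
  have hpart3 : ∀ m : Fin M,
      Summable fun t : (ℕ × ℕ) × (ℕ × ℕ) => ‖Qd a d m t‖ := by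
    intro m
    have hGswap : Summable fun q : ((ℕ × ℕ) × (ℕ × ℕ)) × ℕ =>
        ‖cf a d m q.2 q.1.1 * (starRingEnd ℂ) (cf a d m q.2 q.1.2)‖ := (hGnorm m).prod_symm
    have htl : ∀ t : (ℕ × ℕ) × (ℕ × ℕ),
        Summable fun l : ℕ => ‖cf a d m l t.1 * (starRingEnd ℂ) (cf a d m l t.2)‖ :=
      fun t => hGswap.prod_factor t
    have hsum_t : Summable fun t : (ℕ × ℕ) × (ℕ × ℕ) =>
        ∑' l : ℕ, ‖cf a d m l t.1 * (starRingEnd ℂ) (cf a d m l t.2)‖ :=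
      ((summable_prod_of_nonneg (fun q => norm_nonneg _)).mp hGswap).2
    refine Summable.of_nonneg_of_le (fun t => norm_nonneg _) (fun t => ?_) hsum_t
    rw [← hBident m t]
    exact norm_tsum_le_tsum_norm (htl t)
  -- per-m main identity
  have hfinal : ∀ m : Fin M,
      (∑' l : ℕ, ((‖∑' z : ℕ × ℕ, cf a d m l z‖ ^ 2 : ℝ) : ℂ)) = ∑' t : (ℕ × ℕ) × (ℕ × ℕ), Qd a d m t := by
    intro m
    have hAmul : ∀ l : ℕ, ((‖∑' z : ℕ × ℕ, cf a d m l z‖ ^ 2 : ℝ) : ℂ)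
        = (∑' z : ℕ × ℕ, cf a d m l z) * (starRingEnd ℂ) (∑' z : ℕ × ℕ, cf a d m l z) := by
      intro l
      rw [Complex.mul_conj, Complex.normSq_eq_norm_sq]
    have hprodsum : ∀ l : ℕ,
        (∑' t : (ℕ × ℕ) × (ℕ × ℕ), cf a d m l t.1 * (starRingEnd ℂ) (cf a d m l t.2))
          = (∑' z : ℕ × ℕ, cf a d m l z) * (starRingEnd ℂ) (∑' z : ℕ × ℕ, cf a d m l z) := by
      intro l
      have hconj : HasSum (fun z : ℕ × ℕ => (starRingEnd ℂ) (cf a d m l z))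
          ((starRingEnd ℂ) (∑' z : ℕ × ℕ, cf a d m l z)) :=
        (hcsum m l).hasSum.map (starRingEnd ℂ) Complex.continuous_conj
      exact ((hcsum m l).hasSum.mul hconj (hpair m l)).tsum_eq
    calc (∑' l : ℕ, ((‖∑' z : ℕ × ℕ, cf a d m l z‖ ^ 2 : ℝ) : ℂ))
        = ∑' l : ℕ, ∑' t : (ℕ × ℕ) × (ℕ × ℕ),
            cf a d m l t.1 * (starRingEnd ℂ) (cf a d m l t.2) := by
          refine tsum_congr fun l => ?_
          rw [hAmul l, ← hprodsum l]
      _ = ∑' x : ℕ × ((ℕ × ℕ) × (ℕ × ℕ)),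
            cf a d m x.1 x.2.1 * (starRingEnd ℂ) (cf a d m x.1 x.2.2) :=
          (Summable.tsum_prod (hG m)).symm
      _ = ∑' y : ((ℕ × ℕ) × (ℕ × ℕ)) × ℕ,
            cf a d m y.2 y.1.1 * (starRingEnd ℂ) (cf a d m y.2 y.1.2) :=
          ((Equiv.prodComm ((ℕ × ℕ) × (ℕ × ℕ)) ℕ).tsum_eq
            (fun x : ℕ × ((ℕ × ℕ) × (ℕ × ℕ)) =>
              cf a d m x.1 x.2.1 * (starRingEnd ℂ) (cf a d m x.1 x.2.2))).symm
      _ = ∑' t : (ℕ × ℕ) × (ℕ × ℕ), ∑' l : ℕ,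
            cf a d m l t.1 * (starRingEnd ℂ) (cf a d m l t.2) :=
          Summable.tsum_prod (hG m).prod_symm
      _ = ∑' t : (ℕ × ℕ) × (ℕ × ℕ), Qd a d m t := tsum_congr fun t => hBident m t
  -- part 1
  have hpart1 : ∀ (l : ℕ) (m : Fin M),
      Summable fun p : {j : ℕ // l ≤ j} × ℕ =>
        ‖a p.2 (p.1 : ℕ) * d p.2 ((p.1 : ℕ) - l) m‖ := by
    intro l m
    refine ((shiftEquiv l).summable_iff
      (f := fun p : {j : ℕ // l ≤ j} × ℕ => ‖a p.2 (p.1 : ℕ) * d p.2 ((p.1 : ℕ) - l) m‖)).mp ?_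
    refine (hswap m l).congr fun z => ?_
    simp [cf, shiftEquiv]
  -- rewriting the subtype sums
  have hA'A : ∀ (l : ℕ) (m : Fin M),
      (∑' p : {j : ℕ // l ≤ j} × ℕ, a p.2 (p.1 : ℕ) * d p.2 ((p.1 : ℕ) - l) m)
        = ∑' z : ℕ × ℕ, cf a d m l z := by
    intro l m
    rw [← Equiv.tsum_eq (shiftEquiv l)
      (fun p : {j : ℕ // l ≤ j} × ℕ => a p.2 (p.1 : ℕ) * d p.2 ((p.1 : ℕ) - l) m)]
    refine tsum_congr fun z => ?_
    simp [cf, shiftEquiv]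
  -- part 2
  have hpart2' : Summable fun w : ℕ × Fin M => ‖∑' z : ℕ × ℕ, cf a d w.2 w.1 z‖ ^ 2 := by
    rw [summable_prod_of_nonneg (fun w => sq_nonneg _)]
    refine ⟨fun l => Summable.of_finite, ?_⟩
    simp only [tsum_fintype]
    exact summable_sum fun m _ => hA2sum m
  have hpart2 : Summable fun w : ℕ × Fin M =>
      ‖∑' p : {j : ℕ // w.1 ≤ j} × ℕ,
          a p.2 (p.1 : ℕ) * d p.2 ((p.1 : ℕ) - w.1) w.2‖ ^ 2 := by
    simp only [hA'A]
    exact hpart2'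
  refine ⟨hpart1, hpart2, fun m => hpart3 m, ?_⟩
  -- final assembly
  simp only [hA'A]
  rw [Complex.ofReal_tsum]
  have hsummC : Summable fun w : ℕ × Fin M =>
      ((‖∑' z : ℕ × ℕ, cf a d w.2 w.1 z‖ ^ 2 : ℝ) : ℂ) :=
    hpart2'.map Complex.ofRealHom Complex.continuous_ofReal
  have hswapped : Summable fun v : Fin M × ℕ =>
      ((‖∑' z : ℕ × ℕ, cf a d v.1 v.2 z‖ ^ 2 : ℝ) : ℂ) :=
    ((Equiv.prodComm (Fin M) ℕ).summable_iff).mpr hsummC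
  calc (∑' w : ℕ × Fin M, ((‖∑' z : ℕ × ℕ, cf a d w.2 w.1 z‖ ^ 2 : ℝ) : ℂ))
      = ∑' v : Fin M × ℕ, ((‖∑' z : ℕ × ℕ, cf a d v.1 v.2 z‖ ^ 2 : ℝ) : ℂ) :=
        ((Equiv.prodComm (Fin M) ℕ).tsum_eq
          (fun w : ℕ × Fin M => ((‖∑' z : ℕ × ℕ, cf a d w.2 w.1 z‖ ^ 2 : ℝ) : ℂ))).symm
    _ = ∑' (m : Fin M) (l : ℕ), ((‖∑' z : ℕ × ℕ, cf a d m l z‖ ^ 2 : ℝ) : ℂ) :=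
        Summable.tsum_prod hswapped
    _ = _ := by
        refine tsum_congr fun m => ?_
        calc (∑' l : ℕ, ((‖∑' z : ℕ × ℕ, cf a d m l z‖ ^ 2 : ℝ) : ℂ))
            = ∑' t : (ℕ × ℕ) × (ℕ × ℕ), Qd a d m t := hfinal m
          _ = _ := tsum_congr fun t => by rw [Qd]
end
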